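/- arXiv:1801.04021 — 11 statements merged into one kernel-verified Lean document; each statement's English description precedes it below -/
import Mathlib

section
/- Fix δ > 0 and set e₀ = 0, e₁ = δ. There exists a constant c > 0, depending only on δ, such that for every ν ∈ (0, π/16), every θ ∈ ℂ with Im θ = ν and |Re θ| ≤ 10⁻³, every i ∈ {0, 1}, every y ≥ 0, and every z ∈ A one has |e_i + e^{−θ}·y − z| ≥ c · sin(ν/2) · (1 + y). -/
open Real

/-- The region `A = A₁ ∪ A₂ ∪ A₃` of the complex plane far away from the spectrum of the
dilated free Spin-Boson Hamiltonian (with `e₀ = 0`, `e₁ = δ`). -/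
def regionA (δ ν : ℝ) : Set ℂ :=
  {z : ℂ | z.re < -(δ / 2)} ∪
  {z : ℂ | z.im > δ / 8 * Real.sin ν} ∪
  {z : ℂ | z.re > δ + δ / 2 ∧ z.im ≥ -Real.sin (ν / 2) * (z.re - (δ + δ / 2))}

/-!
Writing `e^{-θ} = r e^{-iν}` with `r = e^{-Re θ} ≥ 1/2`, the point `e + e^{-θ} y` is
`e + e^{-iν} t` with `t = r y ≥ y/2`. Each piece of `A` is separated from this ray by a linear
functional of norm one whose gap grows linearly in `t`: `Re` for `A₁`, `-Im` for `A₂`, and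
`-Im (e^{iν/2} ·)` for `A₃`.
-/

noncomputable def rayPoint (e ν t : ℝ) : ℂ := e + Complex.exp (-(ν * Complex.I)) * t

@[simp] lemma rayPoint_re (e ν t : ℝ) : (rayPoint e ν t).re = e + cos ν * t := by
  simp [rayPoint, Complex.exp_re]

@[simp] lemma rayPoint_im (e ν t : ℝ) : (rayPoint e ν t).im = -(sin ν * t) := by
  simp [rayPoint, Complex.exp_im]

lemma sin_mul_re_add_cos_mul_im_le_norm (φ : ℝ) (u : ℂ) :
    sin φ * u.re + cos φ * u.im ≤ ‖u‖ := by
  have h := Complex.im_le_norm (Complex.exp (φ * Complex.I) * u)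
  simpa [Complex.mul_im, Complex.exp_ofReal_mul_I_re, Complex.exp_ofReal_mul_I_im,
    Complex.norm_exp_ofReal_mul_I, add_comm] using h

lemma ofReal_add_exp_neg_mul_ofReal_eq_rayPoint (θ : ℂ) (e y : ℝ) :
    (e : ℂ) + Complex.exp (-θ) * y = rayPoint e θ.im (Real.exp (-θ.re) * y) := by
  conv_lhs => rw [← Complex.re_add_im θ]
  rw [rayPoint, neg_add, Complex.exp_add]
  push_cast
  ring

section RegionBounds

variable {δ ν e t : ℝ} {z : ℂ}

lemma add_cos_mul_le_norm_rayPoint_sub_of_re_lt (he : 0 ≤ e) (hz : z.re < -(δ / 2)) :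
    δ / 2 + cos ν * t ≤ ‖rayPoint e ν t - z‖ := by
  have h := Complex.re_le_norm (rayPoint e ν t - z)
  rw [Complex.sub_re, rayPoint_re] at h
  linarith

lemma add_mul_sin_le_norm_rayPoint_sub_of_lt_im (hz : δ / 8 * sin ν < z.im) :
    (δ / 8 + t) * sin ν ≤ ‖rayPoint e ν t - z‖ := by
  have h := (neg_le_abs _).trans (Complex.abs_im_le_norm (rayPoint e ν t - z))
  rw [Complex.sub_im, rayPoint_im] at h
  linarith

/-- `Im (e^{iν/2} ·)` is at least `(3δ/2) sin(ν/2)` on `A₃` and equals `(e - t) sin(ν/2)` on the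
ray. -/
lemma sin_half_mul_le_norm_rayPoint_sub_of_mem_sector (hν₀ : 0 ≤ ν) (hν : ν ≤ π)
    (he : e ≤ δ) (hz₁ : δ + δ / 2 < z.re)
    (hz₂ : -sin (ν / 2) * (z.re - (δ + δ / 2)) ≤ z.im) :
    sin (ν / 2) * (δ / 2 + t) ≤ ‖rayPoint e ν t - z‖ := by
  have hs : 0 ≤ sin (ν / 2) := sin_nonneg_of_nonneg_of_le_pi (by linarith) (by linarith)
  have hc : 0 ≤ cos (ν / 2) := cos_nonneg_of_mem_Icc ⟨by linarith, by linarith⟩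
  have hrot : cos (ν / 2) * sin ν - sin (ν / 2) * cos ν = sin (ν / 2) := by
    have h := sin_sub ν (ν / 2)
    rw [sub_half] at h
    linarith
  have h := sin_mul_re_add_cos_mul_im_le_norm (ν / 2) (z - rayPoint e ν t)
  rw [norm_sub_rev, Complex.sub_re, Complex.sub_im, rayPoint_re, rayPoint_im] at h
  have hedge := mul_le_mul_of_nonneg_left hz₂ hc
  have hcorner := mul_nonneg (mul_nonneg hs (sub_nonneg.2 (cos_le_one (ν / 2))))
    (sub_nonneg.2 hz₁.le)
  have he' := mul_le_mul_of_nonneg_left he hs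
  linear_combination h + hedge + hcorner + he' - t * hrot

lemma sin_half_mul_le_norm_rayPoint_sub (hδ : 0 ≤ δ) (hν₀ : 0 ≤ ν)
    (hν : ν ≤ π / 3) (he₀ : 0 ≤ e) (heδ : e ≤ δ) (ht : 0 ≤ t) (hz : z ∈ regionA δ ν) :
    sin (ν / 2) * (δ / 8 + t / 2) ≤ ‖rayPoint e ν t - z‖ := by
  have hs₀ : 0 ≤ sin (ν / 2) := sin_nonneg_of_nonneg_of_le_pi (by linarith) (by linarith)
  have hs : sin (ν / 2) ≤ sin ν :=
    sin_le_sin_of_le_of_le_pi_div_two (by linarith) (by linarith) (by linarith)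
  have hcos : 1 / 2 ≤ cos ν := by
    rw [← cos_pi_div_three]
    exact cos_le_cos_of_nonneg_of_le_pi hν₀ (by linarith [pi_pos]) hν
  rcases hz with (hz | hz) | ⟨hz₁, hz₂⟩
  · refine le_trans ?_ (add_cos_mul_le_norm_rayPoint_sub_of_re_lt he₀ hz)
    nlinarith [sin_le_one (ν / 2)]
  · refine le_trans ?_ (add_mul_sin_le_norm_rayPoint_sub_of_lt_im hz)
    nlinarith
  · refine le_trans ?_ (sin_half_mul_le_norm_rayPoint_sub_of_mem_sector hν₀
      (by linarith [pi_pos]) heδ hz₁ hz₂)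
    gcongr <;> linarith

end RegionBounds

/-- There is `c > 0` depending only on `δ` such that for every
`ν ∈ (0, π/16)`, every `θ` with `Im θ = ν`, `|Re θ| ≤ 10⁻³`, every `e ∈ {e₀, e₁} = {0, δ}`,
every `y ≥ 0` and every `z ∈ A`: `|e + e^{-θ} y - z| ≥ c sin(ν/2) (1 + y)`. -/
theorem dist_spectrum_regionA (δ : ℝ) (hδ : 0 < δ) :
    ∃ c > 0, ∀ ν ∈ Set.Ioo (0 : ℝ) (Real.pi / 16), ∀ θ : ℂ, θ.im = ν →
      |θ.re| ≤ 1 / 1000 → ∀ e ∈ ({0, δ} : Set ℝ), ∀ y : ℝ, 0 ≤ y →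
        ∀ z ∈ regionA δ ν,
          c * Real.sin (ν / 2) * (1 + y) ≤
            ‖(e : ℂ) + Complex.exp (-θ) * (y : ℂ) - z‖ := by
  refine ⟨min (δ / 8) (1 / 4), by positivity, ?_⟩
  rintro ν ⟨hν₀, hν⟩ θ rfl hθ e he y hy z hz
  have he : 0 ≤ e ∧ e ≤ δ := by
    rcases he with rfl | rfl <;> constructor <;> linarith
  have hr : 1 / 2 ≤ Real.exp (-θ.re) := by
    linarith [add_one_le_exp (-θ.re), (abs_le.1 hθ).2]
  rw [ofReal_add_exp_neg_mul_ofReal_eq_rayPoint]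
  refine le_trans ?_ (sin_half_mul_le_norm_rayPoint_sub hδ.le hν₀.le (by linarith [pi_pos])
    he.1 he.2 (by positivity) hz)
  have hs₀ : 0 ≤ sin (θ.im / 2) :=
    sin_nonneg_of_nonneg_of_le_pi (by linarith) (by linarith [pi_pos])
  have hc : min (δ / 8) (1 / 4) * (1 + y) ≤ δ / 8 + Real.exp (-θ.re) * y / 2 := by
    nlinarith [min_le_left (δ / 8) (1 / 4), min_le_right (δ / 8) (1 / 4)]
  calc min (δ / 8) (1 / 4) * sin (θ.im / 2) * (1 + y)
      = sin (θ.im / 2) * (min (δ / 8) (1 / 4) * (1 + y)) := by ring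
    _ ≤ _ := mul_le_mul_of_nonneg_left hc hs₀
end

section
/- Fix δ > 0 and set e₀ = 0, e₁ = δ. There exists a constant c > 0, depending only on δ, such that for every ν ∈ (0, π/16), every θ ∈ ℂ with Im θ = ν and |Re θ| ≤ 10⁻³, every i, j ∈ {0, 1}, every y ≥ 0, and every z ∈ A one has |e_j + y·e^{−θ} − z| ≥ c · sin(ν/2) · |e_i − z|. -/
/-!
Write `D` for the distance from `z` to the ray `eⱼ + ℝ₊ e^{-iν}`, which contains
`eⱼ + y e^{-θ}` because `Im θ = ν`. Rotating by `e^{iν}` turns the ray into `[0, ∞)`, so `D`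
dominates three linear expressions: the real part and the imaginary part of the difference, and
the distance to the line through the ray. Seen from `eⱼ`, every `z ∈ A` lies outside a sector of
half-opening `≈ ν/2` around `e^{-iν}`, which gives `sin(ν/2) |z - eⱼ| ≤ 4 D`; and `A` keeps
distance `≳ sin(ν/2) δ` from the ray, which gives `sin(ν/2) δ ≤ 8 D`. As `|eᵢ - eⱼ| ≤ δ`, the
triangle inequality yields the claim with `c = 1/12`.
-/

open Real

section Trig

variable {ν : ℝ}

lemma half_le_cos (hν : |ν| ≤ 1) : 1 / 2 ≤ cos ν := by
  have := one_sub_sq_div_two_le_cos (x := ν)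
  nlinarith [sq_abs ν, abs_nonneg ν]

lemma three_halves_mul_sin_half_le_sin (hν₀ : 0 ≤ ν) (hν₁ : ν ≤ 1) :
    3 / 2 * sin (ν / 2) ≤ sin ν := by
  have hs : 0 ≤ sin (ν / 2) :=
    sin_nonneg_of_nonneg_of_le_pi (by linarith) (by linarith [pi_gt_three])
  have hc : 3 / 4 ≤ cos (ν / 2) := by
    have := one_sub_sq_div_two_le_cos (x := ν / 2)
    nlinarith
  calc 3 / 2 * sin (ν / 2) ≤ 2 * sin (ν / 2) * cos (ν / 2) := by nlinarith
    _ = sin ν := by rw [← sin_two_mul]; ring_nf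

end Trig

section Ray

open Complex

lemma ofReal_mul_exp_neg (y : ℝ) (θ : ℂ) :
    (y : ℂ) * exp (-θ) = ((y * Real.exp (-θ.re) : ℝ) : ℂ) * exp (-(θ.im * I)) := by
  conv_lhs => rw [← re_add_im θ]
  rw [neg_add, Complex.exp_add, ofReal_mul, ofReal_exp, ofReal_neg, mul_assoc]

variable (r ν : ℝ) (w : ℂ)

lemma ofReal_mul_exp_neg_mul_I_eq : (r : ℂ) * exp (-(ν * I)) = r * exp ((-ν : ℝ) * I) := by
  push_cast
  ring_nf

lemma mul_cos_sub_re_le_norm : r * Real.cos ν - w.re ≤ ‖(r : ℂ) * exp (-(ν * I)) - w‖ := by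
  convert re_le_norm ((r : ℂ) * exp (-(ν * I)) - w) using 1
  rw [ofReal_mul_exp_neg_mul_I_eq, sub_re, re_ofReal_mul, exp_ofReal_mul_I_re, Real.cos_neg]

lemma abs_mul_sin_add_im_le_norm :
    |r * Real.sin ν + w.im| ≤ ‖(r : ℂ) * exp (-(ν * I)) - w‖ := by
  convert abs_im_le_norm ((r : ℂ) * exp (-(ν * I)) - w) using 1
  rw [ofReal_mul_exp_neg_mul_I_eq, sub_im, im_ofReal_mul, exp_ofReal_mul_I_im, Real.sin_neg,
    ← abs_neg]
  ring_nf

lemma abs_im_mul_cos_add_re_mul_sin_le_norm :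
    |w.im * Real.cos ν + w.re * Real.sin ν| ≤ ‖(r : ℂ) * exp (-(ν * I)) - w‖ := by
  have hrot : exp (ν * I) * ((r : ℂ) * exp (-(ν * I)) - w) = r - exp (ν * I) * w := by
    rw [mul_sub, mul_left_comm, ← Complex.exp_add, add_neg_cancel, Complex.exp_zero, mul_one]
  have him : (exp (ν * I) * ((r : ℂ) * exp (-(ν * I)) - w)).im
      = -(w.im * Real.cos ν + w.re * Real.sin ν) := by
    rw [hrot, sub_im, ofReal_im, mul_im, exp_ofReal_mul_I_re, exp_ofReal_mul_I_im]
    ring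
  calc |w.im * Real.cos ν + w.re * Real.sin ν|
      = |(exp (ν * I) * ((r : ℂ) * exp (-(ν * I)) - w)).im| := by rw [him, abs_neg]
    _ ≤ ‖exp (ν * I) * ((r : ℂ) * exp (-(ν * I)) - w)‖ := abs_im_le_norm _
    _ = ‖(r : ℂ) * exp (-(ν * I)) - w‖ := by rw [norm_mul, norm_exp_ofReal_mul_I, one_mul]

end Ray

/-- The complement of the open sector `{w | 0 < re w, im w < -sin (ν/2) re w}`, which contains
the direction `e^{-iν}` of the dilated spectrum. -/
def outsideSector (ν : ℝ) : Set ℂ := {w | w.re ≤ 0 ∨ -(sin (ν / 2) * w.re) ≤ w.im}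

open Complex in
lemma sin_half_mul_norm_le_of_mem_outsideSector {r ν : ℝ} {w : ℂ} (hν₀ : 0 ≤ ν) (hν₁ : ν ≤ 1)
    (hr : 0 ≤ r) (hw : w ∈ outsideSector ν) :
    Real.sin (ν / 2) * ‖w‖ ≤ 4 * ‖(r : ℂ) * exp (-(ν * I)) - w‖ := by
  have hs₀ : 0 ≤ Real.sin (ν / 2) :=
    sin_nonneg_of_nonneg_of_le_pi (by linarith) (by linarith [pi_gt_three])
  have hs₁ := Real.sin_le_one (ν / 2)
  have hsS := three_halves_mul_sin_half_le_sin hν₀ hν₁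
  have hc := half_le_cos (abs_le.2 ⟨by linarith, hν₁⟩)
  have hrc : 0 ≤ r * Real.cos ν := mul_nonneg hr (by linarith)
  have hrS : 0 ≤ r * Real.sin ν := mul_nonneg hr (by linarith)
  have hre := mul_cos_sub_re_le_norm r ν w
  have him := abs_le.1 (abs_mul_sin_add_im_le_norm r ν w)
  have hline := abs_le.1 (abs_im_mul_cos_add_re_mul_sin_le_norm r ν w)
  have hnorm := Complex.norm_le_abs_re_add_abs_im w
  set s := Real.sin (ν / 2)
  set D := ‖(r : ℂ) * exp (-(ν * I)) - w‖
  suffices s * (|w.re| + |w.im|) ≤ 4 * D by nlinarith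
  rcases le_or_gt w.re 0 with hp | hp <;> rcases le_or_gt 0 w.im with hq | hq
  · rw [abs_of_nonpos hp, abs_of_nonneg hq]
    nlinarith
  · rw [abs_of_nonpos hp, abs_of_neg hq]
    nlinarith
  · rw [abs_of_pos hp, abs_of_nonneg hq]
    nlinarith
  · have hsq : -(s * w.re) ≤ w.im := hw.resolve_left hp.not_ge
    rw [abs_of_pos hp, abs_of_neg hq]
    -- `w.im cos ν + w.re sin ν ≥ -s w.re + (3/2) s w.re`, so the line bound controls `s w.re`
    nlinarith [Real.cos_le_one ν]

section RegionA

variable {δ ν a : ℝ} {z : ℂ}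

lemma sub_mem_outsideSector_of_mem_regionA (hδ : 0 ≤ δ) (ha₀ : 0 ≤ a) (ha : a ≤ δ)
    (hν₀ : 0 ≤ ν) (hν₁ : ν ≤ π) (hz : z ∈ regionA δ ν) : z - a ∈ outsideSector ν := by
  have hs : 0 ≤ sin (ν / 2) := sin_nonneg_of_nonneg_of_le_pi (by linarith) (by linarith)
  have hS : 0 ≤ sin ν := sin_nonneg_of_nonneg_of_le_pi hν₀ hν₁
  simp only [outsideSector, Set.mem_ofPred_eq, Complex.sub_re, Complex.sub_im,
    Complex.ofReal_re, Complex.ofReal_im, sub_zero]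
  rcases hz with (h | h) | ⟨-, h⟩
  · exact Or.inl (by linarith [h.out])
  · have hβ : 0 ≤ z.im := le_trans (by positivity) (le_of_lt h)
    rcases le_or_gt (z.re - a) 0 with hp | hp
    · exact Or.inl hp
    · exact Or.inr (by nlinarith)
  · exact Or.inr (by nlinarith)

open Complex in
lemma sin_half_mul_le_of_mem_regionA {r : ℝ} (hδ : 0 ≤ δ) (ha₀ : 0 ≤ a) (ha : a ≤ δ)
    (hν₀ : 0 ≤ ν) (hν₁ : ν ≤ 1) (hr : 0 ≤ r) (hz : z ∈ regionA δ ν) :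
    Real.sin (ν / 2) * δ ≤ 8 * ‖(r : ℂ) * exp (-(ν * I)) - (z - a)‖ := by
  have hs₀ : 0 ≤ Real.sin (ν / 2) :=
    sin_nonneg_of_nonneg_of_le_pi (by linarith) (by linarith [pi_gt_three])
  have hs₁ := Real.sin_le_one (ν / 2)
  have hsS := three_halves_mul_sin_half_le_sin hν₀ hν₁
  have hc := half_le_cos (abs_le.2 ⟨by linarith, hν₁⟩)
  have hrc : 0 ≤ r * Real.cos ν := mul_nonneg hr (by linarith)
  have hrS : 0 ≤ r * Real.sin ν := mul_nonneg hr (by linarith)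
  have hre := mul_cos_sub_re_le_norm r ν (z - a)
  have him := abs_le.1 (abs_mul_sin_add_im_le_norm r ν (z - a))
  have hline := abs_le.1 (abs_im_mul_cos_add_re_mul_sin_le_norm r ν (z - a))
  simp only [sub_re, sub_im, ofReal_re, ofReal_im, sub_zero] at hre him hline
  rcases hz with (h | h) | ⟨hx, hβ⟩
  · have h : z.re < -(δ / 2) := h
    nlinarith
  · have h : z.im > δ / 8 * Real.sin ν := h
    nlinarith
  · rcases le_or_gt 0 z.im with hq | hq
    · nlinarith
    · nlinarith [Real.cos_le_one ν]

end RegionA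

/-- There is `c > 0` depending only on `δ` such that for every
`ν ∈ (0, π/16)`, every `θ` with `Im θ = ν`, `|Re θ| ≤ 10⁻³`, every
`eᵢ, eⱼ ∈ {e₀, e₁} = {0, δ}`, every `y ≥ 0` and every `z ∈ A`:
`|eⱼ + y e^{-θ} - z| ≥ c sin(ν/2) |eᵢ - z|`. -/
theorem dist_spectrum_regionA_relative (δ : ℝ) (hδ : 0 < δ) :
    ∃ c > 0, ∀ ν ∈ Set.Ioo (0 : ℝ) (Real.pi / 16), ∀ θ : ℂ, θ.im = ν →
      |θ.re| ≤ 1 / 1000 → ∀ ei ∈ ({0, δ} : Set ℝ), ∀ ej ∈ ({0, δ} : Set ℝ),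
        ∀ y : ℝ, 0 ≤ y → ∀ z ∈ regionA δ ν,
          c * Real.sin (ν / 2) * ‖(ei : ℂ) - z‖ ≤
            ‖(ej : ℂ) + (y : ℂ) * Complex.exp (-θ) - z‖ := by
  refine ⟨1 / 12, by norm_num, ?_⟩
  rintro ν ⟨hν₀, hν₁⟩ θ hθ - ei hei ej hej y hy z hz
  have hν : ν ≤ 1 := by linarith [pi_lt_four]
  have hej₀ : 0 ≤ ej ∧ ej ≤ δ := by rcases hej with rfl | rfl <;> simp [hδ.le]
  have hei_z : ‖(ei : ℂ) - z‖ ≤ δ + ‖z - ej‖ := by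
    have hij : ‖(ei : ℂ) - ej‖ ≤ δ := by
      rcases hei with rfl | rfl <;> rcases hej with rfl | rfl <;> simp [abs_of_pos hδ, hδ.le]
    have := norm_sub_le_norm_sub_add_norm_sub (ei : ℂ) ej z
    rw [norm_sub_rev (ej : ℂ)] at this
    linarith
  have hray : (ej : ℂ) + y * Complex.exp (-θ) - z
      = ((y * Real.exp (-θ.re) : ℝ) : ℂ) * Complex.exp (-(ν * Complex.I)) - (z - ej) := by
    rw [ofReal_mul_exp_neg, hθ]
    ring
  have hr : 0 ≤ y * Real.exp (-θ.re) := by positivity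
  have hδD := sin_half_mul_le_of_mem_regionA hδ.le hej₀.1 hej₀.2 hν₀.le hν hr hz
  have hzD := sin_half_mul_norm_le_of_mem_outsideSector hν₀.le hν hr
    (sub_mem_outsideSector_of_mem_regionA hδ.le hej₀.1 hej₀.2 hν₀.le (by linarith) hz)
  have hs : 0 ≤ Real.sin (ν / 2) := sin_nonneg_of_nonneg_of_le_pi (by linarith) (by linarith)
  rw [hray]
  calc 1 / 12 * Real.sin (ν / 2) * ‖(ei : ℂ) - z‖
      ≤ 1 / 12 * (Real.sin (ν / 2) * δ + Real.sin (ν / 2) * ‖z - ej‖) := by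
        rw [mul_assoc, ← mul_add]
        gcongr
    _ ≤ _ := by linarith
end

section
/- Let ν ∈ (0, π/16), let θ ∈ ℂ with Im θ = ν and |Re θ| ≤ 10⁻³, let λ ∈ ℂ, let ρ' > 0, and let z ∈ ℂ satisfy Im z ≥ Im λ − (2/5)·ρ'·sin ν. Then for every s ≥ ρ' one has |λ − (z − e^{−θ}·s)| ≥ (1/4)·ρ'·sin ν. -/
/-!
Only imaginary parts matter. Since `Im (e^{-θ} s) = -e^{-Re θ} s sin ν` with `e^{-Re θ} ≥ 999/1000`,
the shift by `e^{-θ} s` moves `z` at least `(999/1000) ρ' sin ν` downwards, while `z` lies at most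
`(2/5) ρ' sin ν` below `λ`; the gap `(999/1000 - 2/5) ρ' sin ν` exceeds `(1/4) ρ' sin ν`.
-/

theorem Complex.im_exp_neg (θ : ℂ) :
    (Complex.exp (-θ)).im = -(Real.exp (-θ.re) * Real.sin θ.im) := by
  simp [Complex.exp_im, Real.sin_neg]

theorem Complex.im_sub_im_sub_mul_le_norm (lam z w : ℂ) (s : ℝ) :
    z.im - lam.im - w.im * s ≤ ‖lam - (z - w * s)‖ := by
  have him : (lam - (z - w * s)).im = -(z.im - lam.im - w.im * s) := by
    simp only [Complex.sub_im, Complex.mul_im, Complex.ofReal_im, mul_zero, Complex.ofReal_re,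
      zero_add, neg_sub]
    ring
  have h := Complex.abs_im_le_norm (lam - (z - w * s))
  rw [him, abs_neg] at h
  exact (le_abs_self _).trans h

/-- Let `ν ∈ (0, π/16)`, `θ` with `Im θ = ν`, `|Re θ| ≤ 10⁻³`, `λ ∈ ℂ`,
`ρ' > 0`, and `z` with `Im z ≥ Im λ - (2/5) ρ' sin ν`. Then for every `s ≥ ρ'`:
`|λ - (z - e^{-θ} s)| ≥ (1/4) ρ' sin ν`. -/
theorem dist_shifted_eigenvalue_lower_bound
    (ν : ℝ) (hν : ν ∈ Set.Ioo (0 : ℝ) (Real.pi / 16))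
    (θ : ℂ) (hθim : θ.im = ν) (hθre : |θ.re| ≤ 1 / 1000)
    (lam : ℂ) (ρ' : ℝ) (hρ' : 0 < ρ')
    (z : ℂ) (hz : lam.im - (2/5) * ρ' * Real.sin ν ≤ z.im) :
    ∀ s : ℝ, ρ' ≤ s →
      (1/4) * ρ' * Real.sin ν ≤ ‖lam - (z - Complex.exp (-θ) * (s : ℂ))‖ := by
  intro s hs
  have hsin : 0 ≤ Real.sin ν :=
    Real.sin_nonneg_of_nonneg_of_le_pi hν.1.le (by linarith [hν.2, Real.pi_pos])
  have hexp : 999 / 1000 ≤ Real.exp (-θ.re) := by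
    linarith [Real.add_one_le_exp (-θ.re), le_abs_self θ.re]
  have hshift : 999 / 1000 * ρ' ≤ Real.exp (-θ.re) * s :=
    mul_le_mul hexp hs hρ'.le (Real.exp_pos _).le
  have hnorm := Complex.im_sub_im_sub_mul_le_norm lam z (Complex.exp (-θ)) s
  rw [Complex.im_exp_neg, hθim] at hnorm
  nlinarith [mul_le_mul_of_nonneg_right hshift hsin]
end

section
/- Let ν ∈ (0, π/16), let θ ∈ ℂ with Im θ = ν and |Re θ| ≤ 10⁻³, let λ ∈ ℂ, let ρ' > 0, and let z ∈ ℂ with z ≠ λ satisfy Im z ≥ Im λ − (2/5)·ρ'·sin ν. Then for every s ≥ ρ' one has 1/|z − λ − e^{−θ}·s| ≤ (4/sin ν) · (1/|z − λ|). -/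
/-! With `w = z - λ` and `u = e^{-θ} s`: since `|Re θ|` is tiny, `‖u‖ ≈ s` and
`Im u ≈ -s sin ν`, while `Im w ≥ -(2/5) s sin ν`. If `‖w‖ ≤ 2s`, the imaginary part of `w - u`
is at least `s sin ν / 2 ≥ (sin ν / 4) ‖w‖`; if `‖w‖ > 2s`, then `‖w - u‖ ≥ ‖w‖ - (3/2) s ≥ ‖w‖ / 4`.
-/

lemma Complex.norm_exp_neg_le_three_halves {θ : ℂ} (hθ : -θ.re ≤ 1 / 3) :
    ‖Complex.exp (-θ)‖ ≤ 3 / 2 := by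
  rw [Complex.norm_exp, Complex.neg_re]
  calc Real.exp (-θ.re) ≤ Real.exp (1 / 3) := Real.exp_le_exp.mpr hθ
    _ ≤ 1 / (1 - 1 / 3) := Real.exp_bound_div_one_sub_of_interval (by norm_num) (by norm_num)
    _ = 3 / 2 := by norm_num

lemma Complex.im_exp_neg_le {θ : ℂ} (hθ : θ.re ≤ 1 / 10) (hsin : 0 ≤ Real.sin θ.im) :
    (Complex.exp (-θ)).im ≤ -(9 / 10 * Real.sin θ.im) := by
  have hexp : 9 / 10 ≤ Real.exp (-θ.re) := by linarith [Real.add_one_le_exp (-θ.re)]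
  rw [Complex.exp_im, Complex.neg_re, Complex.neg_im, Real.sin_neg]
  nlinarith

lemma Complex.mul_norm_le_norm_sub_of_im_le {w u : ℂ} {s t : ℝ} (ht₀ : 0 ≤ t) (ht₁ : t ≤ 1)
    (hw : -(2 / 5 * (s * t)) ≤ w.im) (hu_im : u.im ≤ -(9 / 10 * (s * t)))
    (hu : ‖u‖ ≤ 3 / 2 * s) :
    t / 4 * ‖w‖ ≤ ‖w - u‖ := by
  rcases le_or_gt ‖w‖ (2 * s) with hsmall | hlarge
  · calc t / 4 * ‖w‖ ≤ t / 4 * (2 * s) := by gcongr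
      _ ≤ (w - u).im := by rw [Complex.sub_im]; linarith
      _ ≤ ‖w - u‖ := (le_abs_self _).trans (Complex.abs_im_le_norm _)
  · calc t / 4 * ‖w‖ ≤ ‖w‖ / 4 := by nlinarith [norm_nonneg w]
      _ ≤ ‖w‖ - ‖u‖ := by linarith
      _ ≤ ‖w - u‖ := norm_sub_norm_le w u

/-- Let `ν ∈ (0, π/16)`, `θ` with `Im θ = ν`, `|Re θ| ≤ 10⁻³`, `λ ∈ ℂ`,
`ρ' > 0`, and `z ≠ λ` with `Im z ≥ Im λ - (2/5) ρ' sin ν`. Then for every `s ≥ ρ'`: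
`1/|z - λ - e^{-θ} s| ≤ (4 / sin ν) (1 / |z - λ|)`. -/
theorem inv_dist_shifted_le
    (ν : ℝ) (hν : ν ∈ Set.Ioo (0 : ℝ) (Real.pi / 16))
    (θ : ℂ) (hθim : θ.im = ν) (hθre : |θ.re| ≤ 1 / 1000)
    (lam : ℂ) (ρ' : ℝ) (hρ' : 0 < ρ')
    (z : ℂ) (hzlam : z ≠ lam) (hz : lam.im - (2/5) * ρ' * Real.sin ν ≤ z.im) :
    ∀ s : ℝ, ρ' ≤ s →
      1 / ‖z - lam - Complex.exp (-θ) * (s : ℂ)‖ ≤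
        (4 / Real.sin ν) * (1 / ‖z - lam‖) := by
  intro s hs
  have hs₀ : 0 < s := hρ'.trans_le hs
  have hsin₀ : 0 < Real.sin ν :=
    Real.sin_pos_of_pos_of_lt_pi hν.1 (by linarith [hν.2, Real.pi_pos])
  obtain ⟨hre₁, hre₂⟩ := abs_le.mp hθre
  have hexp_im := Complex.im_exp_neg_le (θ := θ) (by linarith) (by rw [hθim]; exact hsin₀.le)
  have hexp_norm := Complex.norm_exp_neg_le_three_halves (θ := θ) (by linarith)
  rw [hθim] at hexp_im
  have hkey : Real.sin ν / 4 * ‖z - lam‖ ≤ ‖z - lam - Complex.exp (-θ) * (s : ℂ)‖ := by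
    refine Complex.mul_norm_le_norm_sub_of_im_le (s := s) hsin₀.le (Real.sin_le_one ν) ?_ ?_ ?_
    · rw [Complex.sub_im]; nlinarith
    · rw [Complex.mul_im, Complex.ofReal_re, Complex.ofReal_im]; nlinarith
    · rw [norm_mul, Complex.norm_real, Real.norm_of_nonneg hs₀.le]; nlinarith
  have hpos : 0 < Real.sin ν / 4 * ‖z - lam‖ := by
    have := norm_pos_iff.mpr (sub_ne_zero.mpr hzlam); positivity
  calc 1 / ‖z - lam - Complex.exp (-θ) * (s : ℂ)‖ ≤ 1 / (Real.sin ν / 4 * ‖z - lam‖) :=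
        one_div_le_one_div_of_le hpos hkey
    _ = 4 / Real.sin ν * (1 / ‖z - lam‖) := by field_simp
end

section
/- Let ν ∈ (0, π/16), let θ ∈ ℂ with Im θ = ν and |Re θ| ≤ 10⁻³, let λ ∈ ℂ, let ρ' > 0, and let z ∈ ℂ satisfy Im z ≥ Im λ − (2/5)·ρ'·sin ν. Then for every s ≥ ρ' one has 1/|z − λ − e^{−θ}·s| ≤ (8/sin ν) · 1/(ρ' + |z − λ|). -/
open Real

/-!
Write `w = z - λ` and `u = e^{-θ}`, so `u` has modulus `r = e^{-Re θ} ≈ 1` and imaginary part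
`-r sin ν`. The shift by `-u s` pushes `w` upwards by `r s sin ν`, which beats the allowed
downward deviation `(2/5) ρ' sin ν ≤ (2/5) s sin ν`; hence `|w - u s| ≥ (r - 2/5) s sin ν`.
Combined with `|w| ≤ |w - u s| + r s` this controls both `ρ' ≤ s` and `|w|` by `|w - u s| / sin ν`.
-/

namespace Complex

theorem exp_neg_im_eq (θ : ℂ) : (exp (-θ)).im = -(‖exp (-θ)‖ * Real.sin θ.im) := by
  rw [exp_im, norm_exp, neg_im, neg_re, Real.sin_neg, mul_neg]

section ShiftedDistance

variable {w u : ℂ} {ρ s κ : ℝ}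

theorem mul_le_im_sub_mul (hρs : ρ ≤ s) (hκ : 0 ≤ κ) (hu : u.im = -(‖u‖ * κ))
    (hw : -(2 / 5 * ρ * κ) ≤ w.im) : (‖u‖ - 2 / 5) * s * κ ≤ (w - u * s).im := by
  have hρκ : ρ * κ ≤ s * κ := mul_le_mul_of_nonneg_right hρs hκ
  simp only [sub_im, mul_im, ofReal_re, ofReal_im, mul_zero, hu]
  nlinarith

theorem mul_add_norm_le_norm_sub_mul (hρ : 0 ≤ ρ) (hρs : ρ ≤ s) (hκ0 : 0 ≤ κ) (hκ1 : κ ≤ 1)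
    (hu_norm : 2 / 3 ≤ ‖u‖) (hu : u.im = -(‖u‖ * κ)) (hw : -(2 / 5 * ρ * κ) ≤ w.im) :
    κ * (ρ + ‖w‖) ≤ 8 * ‖w - u * s‖ := by
  have him : (‖u‖ - 2 / 5) * s * κ ≤ ‖w - u * s‖ :=
    (mul_le_im_sub_mul hρs hκ0 hu hw).trans (im_le_norm _)
  have htri : ‖w‖ ≤ ‖w - u * s‖ + ‖u‖ * s := by
    simpa [norm_mul, abs_of_nonneg (hρ.trans hρs)] using norm_le_norm_sub_add w (u * s)
  -- `s κ (1 + ‖u‖) ≤ 7 (‖u‖ - 2/5) s κ` exactly when `‖u‖ ≥ 19/30`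
  have hsκ : 0 ≤ s * κ := mul_nonneg (hρ.trans hρs) hκ0
  nlinarith [mul_le_mul_of_nonneg_left htri hκ0, mul_le_mul_of_nonneg_right hρs hκ0,
    mul_le_mul_of_nonneg_right hκ1 (norm_nonneg (w - u * s)), mul_nonneg hsκ (norm_nonneg u)]

end ShiftedDistance

end Complex

/-- Let `ν ∈ (0, π/16)`, `θ` with `Im θ = ν`, `|Re θ| ≤ 10⁻³`, `λ ∈ ℂ`,
`ρ' > 0`, and `z` with `Im z ≥ Im λ - (2/5) ρ' sin ν`. Then for every `s ≥ ρ'`: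
`1/|z - λ - e^{-θ} s| ≤ (8 / sin ν) · 1/(ρ' + |z - λ|)`. -/
theorem inv_dist_shifted_le_reg
    (ν : ℝ) (hν : ν ∈ Set.Ioo (0 : ℝ) (Real.pi / 16))
    (θ : ℂ) (hθim : θ.im = ν) (hθre : |θ.re| ≤ 1 / 1000)
    (lam : ℂ) (ρ' : ℝ) (hρ' : 0 < ρ')
    (z : ℂ) (hz : lam.im - (2/5) * ρ' * Real.sin ν ≤ z.im) :
    ∀ s : ℝ, ρ' ≤ s →
      1 / ‖z - lam - Complex.exp (-θ) * (s : ℂ)‖ ≤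
        (8 / Real.sin ν) * (1 / (ρ' + ‖z - lam‖)) := by
  intro s hs
  have hsin : 0 < Real.sin ν :=
    sin_pos_of_pos_of_lt_pi hν.1 (by linarith [hν.2, pi_pos])
  have hu_norm : 2 / 3 ≤ ‖Complex.exp (-θ)‖ := by
    rw [Complex.norm_exp, Complex.neg_re]
    linarith [add_one_le_exp (-θ.re), le_of_abs_le hθre]
  have hu_im := Complex.exp_neg_im_eq θ
  rw [hθim] at hu_im
  have hw : -(2 / 5 * ρ' * Real.sin ν) ≤ (z - lam).im := by
    rw [Complex.sub_im]; linarith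
  have hdist_pos : 0 < ‖z - lam - Complex.exp (-θ) * s‖ := by
    have him := Complex.mul_le_im_sub_mul hs hsin.le hu_im hw
    have hpos : 0 < (‖Complex.exp (-θ)‖ - 2 / 5) * s * Real.sin ν :=
      mul_pos (mul_pos (by linarith) (hρ'.trans_le hs)) hsin
    linarith [Complex.im_le_norm (z - lam - Complex.exp (-θ) * s)]
  have key :=
    Complex.mul_add_norm_le_norm_sub_mul hρ'.le hs hsin.le (sin_le_one ν) hu_norm hu_im hw
  rw [div_mul_div_comm, mul_one, div_le_div_iff₀ hdist_pos (by positivity)]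
  linarith
end

section
/- Let ν ∈ (0, π/16), let θ ∈ ℂ with Im θ = ν and |Re θ| ≤ 10⁻³, let λ ∈ ℂ, let ρ' > 0, and let z ∈ ℂ with z ≠ λ satisfy Im z ≥ Im λ − (2/5)·ρ'·sin ν. Then for every r with 0 ≤ r ≤ |z − λ| and every y ∈ {0} ∪ [ρ', ∞) one has |(y + r)/(e^{−θ}·y + λ − z)| ≤ 10/sin ν. -/
/-!
Write `w = z - λ`, `W = ‖w‖` and `D = e^{-θ} y - w` for the denominator; with `e = exp (-Re θ)`,
`|Re θ| ≤ 10⁻³` gives `9/10 ≤ e ≤ 2`. Two lower bounds on `‖D‖` suffice: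
`‖D‖ ≥ W - e y ≥ W - 2y` (triangle inequality) and `‖D‖ ≥ -Im D = e y sin ν + Im w ≥ (y sin ν)/2`,
where the last step uses `Im w ≥ -(2/5) ρ' sin ν ≥ -(2/5) y sin ν` (trivial for `y = 0`).
If `W ≤ 3y` the second bound controls `y + r ≤ 4y`; otherwise the first one controls `y + r ≤ y + W`.
-/

open Real

lemma exp_neg_mem_Icc_of_abs_le {x : ℝ} (hx : |x| ≤ 1 / 10) :
    9 / 10 ≤ exp (-x) ∧ exp (-x) ≤ 2 := by
  obtain ⟨hx₁, hx₂⟩ := abs_le.mp hx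
  refine ⟨by linarith [add_one_le_exp (-x)], ?_⟩
  have hexp : 9 / 10 ≤ exp x := by linarith [add_one_le_exp x]
  rw [exp_neg, inv_le_iff_one_le_mul₀ (exp_pos x)]
  linarith

lemma mul_add_le_ten_mul {s y r W D : ℝ} (hs₀ : 0 ≤ s) (hs₁ : s ≤ 1) (hy : 0 ≤ y)
    (hr : 0 ≤ r) (hrW : r ≤ W) (hD_im : s * y / 2 ≤ D) (hD_tri : W - 2 * y ≤ D) :
    s * (y + r) ≤ 10 * D := by
  rcases le_or_gt W (3 * y) with hW | hW
  · nlinarith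
  · nlinarith

lemma div_le_div_of_mul_le_mul {a b c d : ℝ} (hb : 0 ≤ b) (hc : 0 ≤ c) (hd : 0 < d)
    (h : d * a ≤ c * b) : a / b ≤ c / d := by
  refine div_le_of_le_mul₀ hb (div_nonneg hc hd.le) ?_
  rw [div_mul_eq_mul_div, le_div_iff₀ hd]
  linarith

namespace Complex

lemma norm_sub_two_mul_le_norm_exp_mul_sub {θ w : ℂ} {y : ℝ} (hy : 0 ≤ y)
    (he : Real.exp (-θ.re) ≤ 2) : ‖w‖ - 2 * y ≤ ‖exp (-θ) * y - w‖ := by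
  have hζy : ‖exp (-θ) * y‖ ≤ 2 * y := by
    rw [norm_mul, norm_exp, Complex.norm_of_nonneg hy, neg_re]
    exact mul_le_mul_of_nonneg_right he hy
  calc ‖w‖ - 2 * y ≤ ‖w‖ - ‖exp (-θ) * y‖ := by linarith
    _ ≤ ‖w - exp (-θ) * y‖ := norm_sub_norm_le _ _
    _ = ‖exp (-θ) * y - w‖ := norm_sub_rev _ _

lemma sin_mul_div_two_le_norm_exp_mul_sub {θ w : ℂ} {ρ y : ℝ} (hy₀ : 0 ≤ y) (hρy : ρ ≤ y)
    (he : 9 / 10 ≤ Real.exp (-θ.re)) (hs : 0 ≤ Real.sin θ.im)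
    (hw : -(2 / 5) * ρ * Real.sin θ.im ≤ w.im) :
    Real.sin θ.im * y / 2 ≤ ‖exp (-θ) * y - w‖ := by
  have him : -(exp (-θ) * y - w).im = Real.exp (-θ.re) * Real.sin θ.im * y + w.im := by
    simp only [sub_im, mul_im, exp_im, exp_re, ofReal_re, ofReal_im, neg_re, neg_im,
      Real.sin_neg]
    ring
  have hsy : 0 ≤ Real.sin θ.im * y := mul_nonneg hs hy₀
  have hρ : ρ * Real.sin θ.im ≤ y * Real.sin θ.im := mul_le_mul_of_nonneg_right hρy hs
  calc Real.sin θ.im * y / 2 ≤ -(exp (-θ) * y - w).im := by rw [him]; nlinarith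
    _ ≤ ‖exp (-θ) * y - w‖ := (neg_le_abs _).trans (abs_im_le_norm _)

end Complex

theorem field_energy_quotient_bound_general
    (ν : ℝ) (hν : ν ∈ Set.Ioo (0 : ℝ) (Real.pi / 16))
    (θ : ℂ) (hθim : θ.im = ν) (hθre : |θ.re| ≤ 1 / 1000)
    (lam : ℂ) (ρ' : ℝ) (hρ' : 0 < ρ')
    (z : ℂ) (hz : lam.im - (2/5) * ρ' * Real.sin ν ≤ z.im) :
    ∀ r : ℝ, 0 ≤ r → r ≤ ‖z - lam‖ →
      ∀ y : ℝ, (y = 0 ∨ ρ' ≤ y) →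
        ‖((y : ℂ) + (r : ℂ)) / (Complex.exp (-θ) * (y : ℂ) + lam - z)‖ ≤
          10 / Real.sin ν := by
  intro r hr hrW y hy
  subst hθim
  have hs : 0 < sin θ.im := sin_pos_of_pos_of_lt_pi hν.1 (by linarith [hν.2, pi_pos])
  obtain ⟨he₁, he₂⟩ := exp_neg_mem_Icc_of_abs_le (hθre.trans (by norm_num))
  have hy₀ : 0 ≤ y := hy.elim (·.ge) (hρ'.le.trans ·)
  have hden : Complex.exp (-θ) * y + lam - z = Complex.exp (-θ) * y - (z - lam) := by ring
  have hnum : ‖(y : ℂ) + r‖ = y + r := by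
    rw [← Complex.ofReal_add, Complex.norm_of_nonneg (add_nonneg hy₀ hr)]
  rw [norm_div, hnum, hden]
  refine div_le_div_of_mul_le_mul (norm_nonneg _) (by norm_num) hs <|
    mul_add_le_ten_mul hs.le (sin_le_one _) hy₀ hr hrW ?_
      (Complex.norm_sub_two_mul_le_norm_exp_mul_sub hy₀ he₂)
  rcases hy with rfl | hρy
  · simp
  · exact Complex.sin_mul_div_two_le_norm_exp_mul_sub hy₀ hρy he₁ hs.le
      (by rw [Complex.sub_im]; linarith)

/-- Let `ν ∈ (0, π/16)`, `θ` with `Im θ = ν`, `|Re θ| ≤ 10⁻³`, `λ ∈ ℂ`,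
`ρ' > 0`, and `z ≠ λ` with `Im z ≥ Im λ - (2/5) ρ' sin ν`. Then for every
`0 ≤ r ≤ |z - λ|` and every `y ∈ {0} ∪ [ρ', ∞)`:
`|(y + r)/(e^{-θ} y + λ - z)| ≤ 10 / sin ν`. -/
theorem field_energy_quotient_bound
    (ν : ℝ) (hν : ν ∈ Set.Ioo (0 : ℝ) (Real.pi / 16))
    (θ : ℂ) (hθim : θ.im = ν) (hθre : |θ.re| ≤ 1 / 1000)
    (lam : ℂ) (ρ' : ℝ) (hρ' : 0 < ρ')
    (z : ℂ) (hzlam : z ≠ lam) (hz : lam.im - (2/5) * ρ' * Real.sin ν ≤ z.im) :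
    ∀ r : ℝ, 0 ≤ r → r ≤ ‖z - lam‖ →
      ∀ y : ℝ, (y = 0 ∨ ρ' ≤ y) →
        ‖((y : ℂ) + (r : ℂ)) / (Complex.exp (-θ) * (y : ℂ) + lam - z)‖ ≤
          10 / Real.sin ν :=
  field_energy_quotient_bound_general ν hν θ hθim hθre lam ρ' hρ' z hz
end

section
/- Let ν ∈ (0, π/16) and let m ≥ 4 be a real number. Let v ∈ ℂ, let ξ₁ > 0 and ξ₂ ∈ ℝ satisfy |ξ₂| ≤ ξ₁ · tan(ν/(2m)), and set w = v + (ξ₁ + i·ξ₂)·exp(−iν). Then C_m(w) ⊆ C_m(v) and dist(C_m(w), ℂ ∖ C_m(v)) ≥ ξ₁ · sin(ν/(2m)). -/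
open Real

/-- The closed cone `C_m(w) = { w + x e^{-iα} : x ≥ 0, |α - ν| ≤ ν/m }` with vertex `w`. -/
def cone (ν m : ℝ) (w : ℂ) : Set ℂ :=
  {z : ℂ | ∃ x : ℝ, 0 ≤ x ∧ ∃ α : ℝ, |α - ν| ≤ ν / m ∧
    z = w + (x : ℂ) * Complex.exp (-(α : ℂ) * Complex.I)}

/-- The distance `dist(S, T) = inf {|p - q| : p ∈ S, q ∈ T}` between two subsets of `ℂ`. -/
noncomputable def setDist (S T : Set ℂ) : ℝ :=
  sInf (Set.image2 dist S T)

/-!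
In the coordinates `u = (z - v) e^{iν}` the cone `C_m(v)` is the sector `|arg u| ≤ θ`, `θ = ν/m`,
i.e. the intersection of two half-planes. The smaller of the signed distances of `u` to their
boundary lines is 1-Lipschitz, superadditive, and nonnegative exactly on the sector. The vertex `w`
has coordinate `ξ₁ + iξ₂`, whose margin is at least `ξ₁ sin θ - |ξ₂| cos θ ≥ ξ₁ tan(θ/2)` (as
`sin θ - tan(θ/2) cos θ = tan(θ/2)`), and `tan(θ/2) ≥ sin(θ/2)`; superadditivity
transfers this margin to every point of `C_m(w)`, and the Lipschitz bound keeps such points that far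
from any point of negative margin.
-/

open Complex

noncomputable def sector (θ : ℝ) : Set ℂ :=
  {u | ∃ x : ℝ, 0 ≤ x ∧ ∃ β : ℝ, |β| ≤ θ ∧ u = x * exp (β * I)}

/-- `sector θ` is cut out by the half-planes `0 ≤ Im (u e^{iθ})` and `Im (u e^{-iθ}) ≤ 0`; for
`0 < θ ≤ π/2` the margin is the distance to the complement on the sector, and negative off it. -/
noncomputable def sectorMargin (θ : ℝ) (u : ℂ) : ℝ :=
  min (u * exp (θ * I)).im (-(u * exp (-θ * I)).im)

lemma mem_cone_iff {ν m : ℝ} {v z : ℂ} :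
    z ∈ cone ν m v ↔ (z - v) * exp (ν * I) ∈ sector (ν / m) := by
  constructor
  · rintro ⟨x, hx, α, hα, rfl⟩
    refine ⟨x, hx, ν - α, by rwa [abs_sub_comm], ?_⟩
    rw [add_sub_cancel_left, mul_assoc, ← Complex.exp_add]
    push_cast
    ring_nf
  · rintro ⟨x, hx, β, hβ, h⟩
    refine ⟨x, hx, ν - β, by rwa [sub_sub_cancel_left, abs_neg], ?_⟩
    have hrot : exp (ν * I) * exp (-ν * I) = 1 := by
      rw [← Complex.exp_add, ← add_mul, add_neg_cancel, zero_mul, Complex.exp_zero]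
    rw [show -((ν - β : ℝ) : ℂ) * I = β * I + -ν * I by push_cast; ring, Complex.exp_add]
    linear_combination exp (-ν * I) * h - (z - v) * hrot

lemma mem_cone_self {ν m : ℝ} (h : 0 ≤ ν / m) (w : ℂ) : w ∈ cone ν m w :=
  ⟨0, le_rfl, ν, by simpa using h, by simp⟩

lemma im_ofReal_mul_exp_mul_exp (x β t : ℝ) :
    (x * exp (β * I) * exp (t * I)).im = x * Real.sin (β + t) := by
  rw [mul_assoc, ← Complex.exp_add, ← add_mul, ← ofReal_add, im_ofReal_mul, exp_ofReal_mul_I_im]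

lemma mem_sector_iff {θ : ℝ} (h0 : 0 < θ) (h1 : θ ≤ π / 2) {u : ℂ} :
    u ∈ sector θ ↔ 0 ≤ sectorMargin θ u := by
  have hpi := Real.pi_pos
  rw [sectorMargin, le_min_iff, ← ofReal_neg, neg_nonneg]
  constructor
  · rintro ⟨x, hx, β, hβ, rfl⟩
    rw [abs_le] at hβ
    rw [im_ofReal_mul_exp_mul_exp, im_ofReal_mul_exp_mul_exp]
    exact ⟨mul_nonneg hx (Real.sin_nonneg_of_nonneg_of_le_pi (by linarith) (by linarith)),
      mul_nonpos_of_nonneg_of_nonpos hx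
        (Real.sin_nonpos_of_nonpos_of_neg_pi_le (by linarith) (by linarith))⟩
  · rintro ⟨hplus, hminus⟩
    have hpolar := norm_mul_exp_arg_mul_I u
    rw [← hpolar, im_ofReal_mul_exp_mul_exp] at hplus hminus
    have hnorm_pos (harg : arg u ≠ 0) : 0 < ‖u‖ := by
      rw [norm_pos_iff]; rintro rfl; exact harg arg_zero
    refine ⟨‖u‖, norm_nonneg u, arg u, abs_le.2 ⟨?_, ?_⟩, hpolar.symm⟩
    · by_contra! h
      have hsin := Real.sin_neg_of_neg_of_neg_pi_lt (x := arg u + θ) (by linarith)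
        (by linarith [neg_pi_lt_arg u])
      nlinarith [hnorm_pos (by linarith)]
    · by_contra! h
      have hsin := Real.sin_pos_of_pos_of_lt_pi (x := arg u + -θ) (by linarith)
        (by linarith [arg_le_pi u])
      nlinarith [hnorm_pos (by linarith)]

lemma sub_exp_notMem_cone {ν m : ℝ} (h0 : 0 < ν / m) (h1 : ν / m ≤ π / 2) (v : ℂ) :
    v - exp (-ν * I) ∉ cone ν m v := by
  have hrot : exp (-ν * I) * exp (ν * I) = 1 := by
    rw [← Complex.exp_add, ← add_mul, neg_add_cancel, zero_mul, Complex.exp_zero]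
  rw [mem_cone_iff, mem_sector_iff h0 h1, not_le, sub_sub_cancel_left, neg_mul, hrot]
  simp only [sectorMargin, neg_one_mul, neg_im, ← ofReal_neg, exp_ofReal_mul_I_im, Real.sin_neg,
    neg_neg, min_self, Left.neg_neg_iff]
  exact Real.sin_pos_of_pos_of_lt_pi h0 (by linarith [Real.pi_pos])

lemma lipschitzWith_im_mul_exp (t : ℝ) : LipschitzWith 1 fun u : ℂ => (u * exp (t * I)).im :=
  LipschitzWith.of_dist_le_mul fun a b => by
    rw [Real.dist_eq, ← sub_im, ← sub_mul, NNReal.coe_one, one_mul, Complex.dist_eq]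
    simpa using abs_im_le_norm ((a - b) * exp (t * I))

lemma lipschitzWith_sectorMargin (θ : ℝ) : LipschitzWith 1 (sectorMargin θ) := by
  have := (lipschitzWith_im_mul_exp θ).min (lipschitzWith_im_mul_exp (-θ)).neg
  simp only [max_self, Pi.neg_apply, ofReal_neg] at this
  exact this

lemma dist_mul_exp_ofReal_mul_I (a b : ℂ) (t : ℝ) :
    dist (a * exp (t * I)) (b * exp (t * I)) = dist a b := by
  rw [Complex.dist_eq, Complex.dist_eq, ← sub_mul, norm_mul, norm_exp_ofReal_mul_I, mul_one]

lemma sectorMargin_add_sectorMargin_le (θ : ℝ) (a b : ℂ) :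
    sectorMargin θ a + sectorMargin θ b ≤ sectorMargin θ (a + b) := by
  simp only [sectorMargin, add_mul, add_im, neg_add]
  exact min_add_min_le_min_add_add

lemma Real.sin_sub_tan_half_mul_cos {θ : ℝ} (h : Real.cos (θ / 2) ≠ 0) :
    Real.sin θ - Real.tan (θ / 2) * Real.cos θ = Real.tan (θ / 2) := by
  obtain ⟨x, rfl⟩ : ∃ x, θ = 2 * x := ⟨θ / 2, by ring⟩
  rw [mul_div_cancel_left₀ x two_ne_zero] at h ⊢
  rw [Real.sin_two_mul, Real.cos_two_mul, Real.tan_eq_sin_div_cos]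
  field_simp
  ring

lemma le_sectorMargin_ofReal_add_I_mul {θ ξ₁ ξ₂ : ℝ} (h0 : 0 ≤ θ) (h1 : θ ≤ π / 2)
    (hξ : |ξ₂| ≤ ξ₁ * Real.tan (θ / 2)) :
    ξ₁ * Real.tan (θ / 2) ≤ sectorMargin θ (ξ₁ + I * ξ₂) := by
  have hcos : 0 ≤ Real.cos θ :=
    Real.cos_nonneg_of_neg_pi_div_two_le_of_le (by linarith [Real.pi_pos]) h1
  have hcos_half : Real.cos (θ / 2) ≠ 0 :=
    (Real.cos_pos_of_mem_Ioo ⟨by linarith [Real.pi_pos], by linarith [Real.pi_pos]⟩).ne'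
  have hsin : ξ₁ * Real.sin θ - ξ₁ * Real.tan (θ / 2) * Real.cos θ = ξ₁ * Real.tan (θ / 2) := by
    linear_combination ξ₁ * Real.sin_sub_tan_half_mul_cos hcos_half
  have hbound : |ξ₂ * Real.cos θ| ≤ ξ₁ * Real.tan (θ / 2) * Real.cos θ := by
    rw [abs_mul, abs_of_nonneg hcos]
    exact mul_le_mul_of_nonneg_right hξ hcos
  obtain ⟨hlo, hhi⟩ := abs_le.1 hbound
  rw [sectorMargin, ← ofReal_neg]
  simp only [mul_im, mul_re, add_re, add_im, ofReal_re, ofReal_im, I_re, I_im, exp_ofReal_mul_I_re,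
    exp_ofReal_mul_I_im, Real.cos_neg, Real.sin_neg, zero_mul, one_mul, mul_zero, sub_zero,
    add_zero, zero_add]
  exact le_min (by linarith) (by linarith)

lemma le_sectorMargin_of_mem_cone {ν m ξ₁ ξ₂ : ℝ} (h0 : 0 < ν / m) (h1 : ν / m ≤ π / 2)
    (hξ₂ : |ξ₂| ≤ ξ₁ * Real.tan (ν / m / 2)) {v w p : ℂ}
    (hw : w = v + ((ξ₁ : ℂ) + I * (ξ₂ : ℂ)) * exp (-I * (ν : ℂ))) (hp : p ∈ cone ν m w) :
    ξ₁ * Real.tan (ν / m / 2) ≤ sectorMargin (ν / m) ((p - v) * exp (ν * I)) := by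
  have hrot : exp (-I * ν) * exp (ν * I) = 1 := by
    rw [← Complex.exp_add, neg_mul, mul_comm, neg_add_cancel, Complex.exp_zero]
  have hshift : (p - v) * exp (ν * I) = (ξ₁ + I * ξ₂) + (p - w) * exp (ν * I) := by
    subst hw
    linear_combination (ξ₁ + I * ξ₂) * hrot
  rw [hshift]
  have hp_margin := (mem_sector_iff h0 h1).1 (mem_cone_iff.1 hp)
  linarith [sectorMargin_add_sectorMargin_le (ν / m) (ξ₁ + I * ξ₂) ((p - w) * exp (ν * I)),
    le_sectorMargin_ofReal_add_I_mul h0.le h1 hξ₂]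

lemma lt_dist_of_le_sectorMargin {ν m c : ℝ} (h0 : 0 < ν / m) (h1 : ν / m ≤ π / 2) {v p q : ℂ}
    (hp : c ≤ sectorMargin (ν / m) ((p - v) * exp (ν * I))) (hq : q ∉ cone ν m v) :
    c < dist p q := by
  rw [mem_cone_iff, mem_sector_iff h0 h1, not_le] at hq
  have hlip := (lipschitzWith_sectorMargin (ν / m)).le_add_mul
    ((p - v) * exp (ν * I)) ((q - v) * exp (ν * I))
  rw [dist_mul_exp_ofReal_mul_I, dist_sub_right, NNReal.coe_one, one_mul] at hlip
  linarith

/-- For `ν ∈ (0, π/16)`, `m ≥ 4`, `v ∈ ℂ`, `ξ₁ > 0`,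
`|ξ₂| ≤ ξ₁ tan(ν/(2m))` and `w = v + (ξ₁ + i ξ₂) e^{-iν}`:
`C_m(w) ⊆ C_m(v)` and `dist(C_m(w), ℂ ∖ C_m(v)) ≥ ξ₁ sin(ν/(2m))`. -/
theorem cone_shift_subset_and_dist
    (ν m : ℝ) (hν : ν ∈ Set.Ioo (0 : ℝ) (Real.pi / 16)) (hm : 4 ≤ m)
    (v : ℂ) (ξ₁ ξ₂ : ℝ) (hξ₁ : 0 < ξ₁) (hξ₂ : |ξ₂| ≤ ξ₁ * Real.tan (ν / (2 * m)))
    (w : ℂ) (hw : w = v + ((ξ₁ : ℂ) + Complex.I * (ξ₂ : ℂ)) * Complex.exp (-Complex.I * (ν : ℂ))) :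
    cone ν m w ⊆ cone ν m v ∧
      ξ₁ * Real.sin (ν / (2 * m)) ≤ setDist (cone ν m w) (cone ν m v)ᶜ := by
  obtain ⟨hν0, hν1⟩ := hν
  have hθ0 : 0 < ν / m := by positivity
  have hθ1 : ν / m ≤ π / 2 := by
    rw [div_le_iff₀ (by positivity)]
    nlinarith [Real.pi_pos]
  rw [show ν / (2 * m) = ν / m / 2 by ring] at hξ₂ ⊢
  have hmargin (p : ℂ) (hp : p ∈ cone ν m w) := le_sectorMargin_of_mem_cone hθ0 hθ1 hξ₂ hw hp
  have hsin_le_tan : Real.sin (ν / m / 2) ≤ Real.tan (ν / m / 2) :=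
    (Real.sin_le (by positivity)).trans (Real.le_tan (by positivity) (by linarith))
  refine ⟨fun p hp => ?_, le_csInf ?_ ?_⟩
  · exact mem_cone_iff.2 <| (mem_sector_iff hθ0 hθ1).2 <|
      ((abs_nonneg ξ₂).trans hξ₂).trans (hmargin p hp)
  · exact ⟨_, Set.mem_image2_of_mem (mem_cone_self hθ0.le w) (sub_exp_notMem_cone hθ0 hθ1 v)⟩
  · rintro _ ⟨p, hp, q, hq, rfl⟩
    exact ((mul_le_mul_of_nonneg_left hsin_le_tan hξ₁.le).trans_lt
      (lt_dist_of_le_sectorMargin hθ0 hθ1 (hmargin p hp) hq)).le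
end

section
/- Let ν ∈ (0, π/16), let m ≥ 4 be a real number, let θ ∈ ℂ with Im θ = ν and |Re θ| ≤ 10⁻³, and let λ ∈ ℂ. Then for every z ∈ ℂ with z ∉ C_m(λ), every r with 0 ≤ r ≤ |z − λ|, and every s ≥ 0, one has (s + r)/dist(z − e^{−θ}·s, C_m(λ)) ≤ 2/sin(ν/m) + r/dist(z, C_m(λ)). -/
open Real

/-!
`C_m(λ)` is a sector of half-aperture `δ = ν/m` around the direction `e^{-iν}`, hence the
intersection of two half-planes bounded by the lines through `λ` in the directions
`e^{-i(ν ± δ)}`. The signed distances to these lines are the `1`-Lipschitz functionals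
`Im (e^{i(ν ± δ)} (· - λ))`, so each one bounds the distance to the cone from below; a point
outside the cone violates one of them, and moving it by `-t e^{-iν}` increases that violation
by `t sin δ`. Moving by `-t e^{-iν}` can only increase the distance to the cone, since the cone
is invariant under translation by `t e^{-iν}`. Finally `e^{-θ} s = s e^{-Re θ} e^{-iν}` with
`s e^{-Re θ} ≥ s / 2`.
-/

lemma abs_le_of_sin_sub_nonpos_of_sin_add_nonneg {γ δ : ℝ} (hγ : γ ∈ Set.Ioc (-π) π)
    (hδ : 0 < δ) (h₁ : sin (γ - δ) ≤ 0) (h₂ : 0 ≤ sin (γ + δ)) : |γ| ≤ δ := by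
  rw [abs_le]
  constructor
  · by_contra! h
    exact (sin_neg_of_neg_of_neg_pi_lt (by linarith) (by linarith [hγ.1])).not_ge h₂
  · by_contra! h
    exact (sin_pos_of_pos_of_lt_pi (by linarith) (by linarith [hγ.2])).not_ge h₁

lemma Complex.exp_neg_eq_exp_re_mul (θ : ℂ) :
    Complex.exp (-θ) = (rexp (-θ.re) : ℂ) * Complex.exp (-θ.im * Complex.I) := by
  conv_lhs => rw [← Complex.re_add_im θ]
  rw [neg_add, Complex.exp_add, Complex.ofReal_exp]
  push_cast
  ring_nf

lemma le_infDist_of_lipschitzWith {α : Type*} [PseudoMetricSpace α] {f : α → ℝ} {s : Set α}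
    (hf : LipschitzWith 1 f) (hs : s.Nonempty) (hfs : ∀ p ∈ s, f p ≤ 0) (x : α) :
    f x ≤ Metric.infDist x s :=
  (Metric.le_infDist hs).2 fun p hp => by
    have := hf.le_add_mul x p
    push_cast at this
    linarith [hfs p hp]

noncomputable def rotIm (ψ : ℝ) (u : ℂ) : ℝ := (Complex.exp (ψ * Complex.I) * u).im

lemma rotIm_add (ψ : ℝ) (u v : ℂ) : rotIm ψ (u + v) = rotIm ψ u + rotIm ψ v := by
  simp only [rotIm, mul_add, Complex.add_im]

lemma rotIm_sub (ψ : ℝ) (u v : ℂ) : rotIm ψ (u - v) = rotIm ψ u - rotIm ψ v := by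
  simp only [rotIm, mul_sub, Complex.sub_im]

lemma abs_rotIm_le (ψ : ℝ) (u : ℂ) : |rotIm ψ u| ≤ ‖u‖ :=
  calc |rotIm ψ u| ≤ ‖Complex.exp (ψ * Complex.I) * u‖ := Complex.abs_im_le_norm _
    _ = ‖u‖ := by rw [norm_mul, Complex.norm_exp_ofReal_mul_I, one_mul]

lemma rotIm_add_angle (ψ φ : ℝ) (u : ℂ) :
    rotIm (ψ + φ) u = rotIm ψ (Complex.exp (φ * Complex.I) * u) := by
  simp only [rotIm, ← mul_assoc, ← Complex.exp_add, Complex.ofReal_add, add_mul]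

lemma rotIm_ofReal_mul_exp (ψ x α : ℝ) :
    rotIm ψ (x * Complex.exp (-α * Complex.I)) = x * sin (ψ - α) := by
  rw [rotIm, mul_left_comm, ← Complex.exp_add, ← add_mul, ← sub_eq_add_neg, ← Complex.ofReal_sub,
    Complex.im_ofReal_mul, Complex.exp_ofReal_mul_I_im]

lemma rotIm_eq_norm_mul_sin (ψ : ℝ) (u : ℂ) : rotIm ψ u = ‖u‖ * sin (ψ + u.arg) := by
  conv_lhs => rw [← Complex.norm_mul_exp_arg_mul_I u, ← neg_neg (u.arg : ℂ), ← Complex.ofReal_neg]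
  rw [rotIm_ofReal_mul_exp, sub_neg_eq_add]

lemma abs_rotIm_sub_le_dist (ψ : ℝ) (x y : ℂ) : |rotIm ψ x - rotIm ψ y| ≤ dist x y := by
  rw [← rotIm_sub, dist_eq_norm]
  exact abs_rotIm_le ψ (x - y)

lemma lipschitzWith_rotIm_sub_const (ψ : ℝ) (c : ℂ) : LipschitzWith 1 fun w => rotIm ψ (w - c) :=
  LipschitzWith.of_le_add fun x y => by
    simp only [rotIm_sub]
    linarith [(abs_le.1 (abs_rotIm_sub_le_dist ψ x y)).2]

lemma lipschitzWith_rotIm_const_sub (ψ : ℝ) (c : ℂ) : LipschitzWith 1 fun w => rotIm ψ (c - w) :=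
  LipschitzWith.of_le_add fun x y => by
    simp only [rotIm_sub]
    linarith [(abs_le.1 (abs_rotIm_sub_le_dist ψ x y)).1]

section Cone

variable {ν m : ℝ} {lam : ℂ}

lemma self_mem_cone (hδ : 0 ≤ ν / m) : lam ∈ cone ν m lam :=
  ⟨0, le_rfl, ν, by simpa using hδ, by simp⟩

lemma mem_cone_iff_s11 (hδ₀ : 0 < ν / m) (hδ : ν / m ≤ π / 2) {w : ℂ} :
    w ∈ cone ν m lam ↔
      rotIm (ν - ν / m) (w - lam) ≤ 0 ∧ 0 ≤ rotIm (ν + ν / m) (w - lam) := by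
  constructor
  · rintro ⟨x, hx, α, hα, rfl⟩
    rw [abs_le] at hα
    simp only [add_sub_cancel_left, rotIm_ofReal_mul_exp]
    exact ⟨mul_nonpos_of_nonneg_of_nonpos hx
        (sin_nonpos_of_nonpos_of_neg_pi_le (by linarith) (by linarith)),
      mul_nonneg hx (sin_nonneg_of_nonneg_of_le_pi (by linarith) (by linarith))⟩
  · rintro ⟨h₁, h₂⟩
    set v := Complex.exp (ν * Complex.I) * (w - lam)
    have hv : ‖v‖ = ‖w - lam‖ := by
      rw [norm_mul, Complex.norm_exp_ofReal_mul_I, one_mul]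
    have hrot : ∀ φ, rotIm (φ + ν) (w - lam) = ‖v‖ * sin (φ + v.arg) := fun φ => by
      rw [rotIm_add_angle, rotIm_eq_norm_mul_sin]
    rw [show ν - ν / m = -(ν / m) + ν by ring, hrot, neg_add_eq_sub] at h₁
    rw [show ν + ν / m = ν / m + ν by ring, hrot, add_comm (ν / m)] at h₂
    refine ⟨‖w - lam‖, norm_nonneg _, ν - v.arg, ?_, ?_⟩
    · rw [sub_sub_cancel_left, abs_neg]
      rcases eq_or_ne v 0 with hv0 | hv0
      · simp [hv0, hδ₀.le]
      · have hpos : 0 < ‖v‖ := norm_pos_iff.2 hv0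
        exact abs_le_of_sin_sub_nonpos_of_sin_add_nonneg (Complex.arg_mem_Ioc v) hδ₀
          (nonpos_of_mul_nonpos_right h₁ hpos) (nonneg_of_mul_nonneg_right h₂ hpos)
    · rw [← hv, ← sub_eq_iff_eq_add']
      calc w - lam = Complex.exp (-ν * Complex.I) * v := by
            rw [← mul_assoc, ← Complex.exp_add, neg_mul, neg_add_cancel, Complex.exp_zero, one_mul]
        _ = Complex.exp (-ν * Complex.I) * (‖v‖ * Complex.exp (v.arg * Complex.I)) := by
            rw [Complex.norm_mul_exp_arg_mul_I]
        _ = ‖v‖ * Complex.exp (-↑(ν - v.arg) * Complex.I) := by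
            rw [mul_left_comm, ← Complex.exp_add]
            push_cast
            ring_nf

lemma add_mem_cone (hδ₀ : 0 < ν / m) (hδ : ν / m ≤ π / 2) {p : ℂ} (hp : p ∈ cone ν m lam)
    {t : ℝ} (ht : 0 ≤ t) : p + t * Complex.exp (-ν * Complex.I) ∈ cone ν m lam := by
  have hσ : 0 ≤ t * sin (ν / m) :=
    mul_nonneg ht (sin_nonneg_of_nonneg_of_le_pi hδ₀.le (by linarith [pi_pos]))
  rw [mem_cone_iff_s11 hδ₀ hδ] at hp ⊢
  rw [add_sub_right_comm, rotIm_add, rotIm_add, rotIm_ofReal_mul_exp, rotIm_ofReal_mul_exp,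
    show ν - ν / m - ν = -(ν / m) by ring, show ν + ν / m - ν = ν / m by ring, sin_neg]
  constructor <;> linarith [hp.1, hp.2]

lemma infDist_cone_le_infDist_sub (hδ₀ : 0 < ν / m) (hδ : ν / m ≤ π / 2) (z : ℂ) {t : ℝ}
    (ht : 0 ≤ t) :
    Metric.infDist z (cone ν m lam) ≤
      Metric.infDist (z - t * Complex.exp (-ν * Complex.I)) (cone ν m lam) :=
  (Metric.le_infDist ⟨lam, self_mem_cone hδ₀.le⟩).2 fun p hp =>
    calc Metric.infDist z (cone ν m lam)
        ≤ dist z (p + t * Complex.exp (-ν * Complex.I)) :=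
          Metric.infDist_le_dist_of_mem (add_mem_cone hδ₀ hδ hp ht)
      _ = dist (z - t * Complex.exp (-ν * Complex.I)) p := by
          rw [dist_eq_norm, dist_eq_norm, sub_add_eq_sub_sub, sub_right_comm]

lemma lt_infDist_sub_of_notMem_cone (hδ₀ : 0 < ν / m) (hδ : ν / m ≤ π / 2) {z : ℂ}
    (hz : z ∉ cone ν m lam) (t : ℝ) :
    t * sin (ν / m) < Metric.infDist (z - t * Complex.exp (-ν * Complex.I)) (cone ν m lam) := by
  have hne : (cone ν m lam).Nonempty := ⟨lam, self_mem_cone hδ₀.le⟩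
  have hshift : ∀ ψ, rotIm ψ (z - t * Complex.exp (-ν * Complex.I)) = rotIm ψ z - t * sin (ψ - ν) :=
    fun ψ => by rw [rotIm_sub, rotIm_ofReal_mul_exp]
  rw [mem_cone_iff_s11 hδ₀ hδ, not_and_or, not_le, not_le, rotIm_sub, rotIm_sub] at hz
  rcases hz with h | h
  · calc t * sin (ν / m) < rotIm (ν - ν / m) (z - t * Complex.exp (-ν * Complex.I) - lam) := by
          rw [rotIm_sub, hshift, show ν - ν / m - ν = -(ν / m) by ring, sin_neg]
          linarith
      _ ≤ _ := le_infDist_of_lipschitzWith (lipschitzWith_rotIm_sub_const _ lam) hne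
          (fun p hp => ((mem_cone_iff_s11 hδ₀ hδ).1 hp).1) _
  · calc t * sin (ν / m) < rotIm (ν + ν / m) (lam - (z - t * Complex.exp (-ν * Complex.I))) := by
          rw [rotIm_sub, hshift, show ν + ν / m - ν = ν / m by ring]
          linarith
      _ ≤ _ := le_infDist_of_lipschitzWith (lipschitzWith_rotIm_const_sub _ lam) hne
          (fun p hp => by
            have := ((mem_cone_iff_s11 hδ₀ hδ).1 hp).2
            rw [rotIm_sub] at this ⊢
            linarith) _

end Cone

/-- For `ν ∈ (0, π/16)`, `m ≥ 4`, `θ` with `Im θ = ν`, `|Re θ| ≤ 10⁻³`,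
`λ ∈ ℂ`, `z ∉ C_m(λ)`, `0 ≤ r ≤ |z - λ|` and `s ≥ 0`:
`(s + r)/dist(z - e^{-θ} s, C_m(λ)) ≤ 2/sin(ν/m) + r/dist(z, C_m(λ))`. -/
theorem cone_dist_quotient_bound
    (ν m : ℝ) (hν : ν ∈ Set.Ioo (0 : ℝ) (Real.pi / 16)) (hm : 4 ≤ m)
    (θ : ℂ) (hθim : θ.im = ν) (hθre : |θ.re| ≤ 1 / 1000) (lam : ℂ) :
    ∀ z : ℂ, z ∉ cone ν m lam →
      ∀ r : ℝ, 0 ≤ r → r ≤ ‖z - lam‖ →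
        ∀ s : ℝ, 0 ≤ s →
          (s + r) / Metric.infDist (z - Complex.exp (-θ) * (s : ℂ)) (cone ν m lam) ≤
            2 / Real.sin (ν / m) + r / Metric.infDist z (cone ν m lam) := by
  intro z hz r hr _ s hs
  obtain ⟨hν₀, hνπ⟩ := hν
  have hδ₀ : 0 < ν / m := div_pos hν₀ (by linarith)
  have hδ : ν / m ≤ π / 2 := by
    rw [div_le_iff₀ (by linarith)]
    nlinarith [pi_pos]
  have hσ : 0 < sin (ν / m) := sin_pos_of_pos_of_lt_pi hδ₀ (by linarith [pi_pos])
  rw [Complex.exp_neg_eq_exp_re_mul, hθim, mul_right_comm, ← Complex.ofReal_mul]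
  set t := rexp (-θ.re) * s
  have ht : 0 ≤ t := by positivity
  have hst : s ≤ 2 * t := by nlinarith [add_one_le_exp (-θ.re), (abs_le.1 hθre).2]
  set D := Metric.infDist (z - t * Complex.exp (-ν * Complex.I)) (cone ν m lam)
  have hd : 0 < Metric.infDist z (cone ν m lam) := by
    simpa using lt_infDist_sub_of_notMem_cone hδ₀ hδ hz 0
  have hdD : Metric.infDist z (cone ν m lam) ≤ D := infDist_cone_le_infDist_sub hδ₀ hδ z ht
  have htD : t * sin (ν / m) < D := lt_infDist_sub_of_notMem_cone hδ₀ hδ hz t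
  rw [add_div]
  refine add_le_add ?_ (div_le_div_of_nonneg_left hr hd hdD)
  rw [div_le_div_iff₀ (hd.trans_le hdD) hσ]
  nlinarith
end

section
/- Let ν ∈ (0, π/16), let m ≥ 4 be a real number, let θ ∈ ℂ with Im θ = ν and |Re θ| ≤ 10⁻³, and let λ ∈ ℂ. Then for every z ∈ ℂ with z ∉ C_m(λ), every r with 0 ≤ r ≤ |z − λ|, and every s ≥ 0, one has |(s + r)/(e^{−θ}·s − (z − λ))| ≤ 6/sin(ν/m). -/
open Real

/-!
Rotating by `e^{iν}` turns `e^{-θ} s - (z - λ)` into `t - u` with `t = s e^{-Re θ} ≥ 0` and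
`u = (z - λ) e^{iν}`, and `z ∉ C_m(λ)` says exactly that `u` lies outside the sector
`|arg u| ≤ ν/m` around the positive real axis. A point outside that sector is at distance at least
`sin(ν/m) · max(t, |u|)` from the point `t` of the axis, while `s + r ≤ 2t + |u|` because
`Re θ` is small.
-/

lemma Complex.abs_arg_le_of_cos_mul_norm_lt_re {β : ℝ} (hβ : 0 ≤ β) {u : ℂ}
    (h : Real.cos β * ‖u‖ < u.re) : |u.arg| ≤ β := by
  have hu : u ≠ 0 := by
    rintro rfl
    simp at h
  have hcos : Real.cos β < Real.cos u.arg := by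
    rwa [Complex.cos_arg hu, lt_div_iff₀ (norm_pos_iff.mpr hu)]
  by_contra! hlt
  have := Real.cos_lt_cos_of_nonneg_of_le_pi hβ (Complex.abs_arg_le_pi u) hlt
  rw [Real.cos_abs] at this
  linarith

lemma re_le_cos_mul_norm_of_notMem_cone {ν m : ℝ} (hνm : 0 ≤ ν / m) {lam z : ℂ}
    (hz : z ∉ cone ν m lam) :
    ((z - lam) * Complex.exp (ν * Complex.I)).re ≤ Real.cos (ν / m) * ‖z - lam‖ := by
  set u := (z - lam) * Complex.exp (ν * Complex.I)
  have hnorm : ‖u‖ = ‖z - lam‖ := by simp [u, Complex.norm_exp_ofReal_mul_I]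
  by_contra! h
  rw [← hnorm] at h
  refine hz ⟨‖u‖, norm_nonneg u, ν - u.arg, ?_, ?_⟩
  · simpa [abs_sub_comm] using Complex.abs_arg_le_of_cos_mul_norm_lt_re hνm h
  · have hsplit : Complex.exp (-((ν - u.arg : ℝ) : ℂ) * Complex.I)
        = Complex.exp (u.arg * Complex.I) * Complex.exp (-(ν * Complex.I)) := by
      rw [← Complex.exp_add]
      push_cast
      ring_nf
    rw [hsplit, ← mul_assoc, Complex.norm_mul_exp_arg_mul_I, mul_assoc, ← Complex.exp_add,
      add_neg_cancel, Complex.exp_zero]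
    ring

lemma Complex.norm_exp_neg_mul_ofReal_sub (θ w : ℂ) (s : ℝ) :
    ‖Complex.exp (-θ) * s - w‖
      = ‖((s * Real.exp (-θ.re) : ℝ) : ℂ) - w * Complex.exp (θ.im * Complex.I)‖ := by
  have hrot : Complex.exp (-θ) * Complex.exp (θ.im * Complex.I) = Real.exp (-θ.re) := by
    rw [← Complex.exp_add, Complex.ofReal_exp]
    congr 1
    apply Complex.ext <;> simp
  rw [← mul_one ‖_ - w‖, ← Complex.norm_exp_ofReal_mul_I θ.im, ← norm_mul, sub_mul,
    mul_right_comm, hrot]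
  push_cast
  ring_nf

lemma sin_mul_max_le_norm_ofReal_sub {β t : ℝ} (hσ : 0 ≤ Real.sin β) (ht : 0 ≤ t) {u : ℂ}
    (hu : u.re ≤ Real.cos β * ‖u‖) :
    Real.sin β * max t ‖u‖ ≤ ‖(t : ℂ) - u‖ := by
  have hpyth := Real.sin_sq_add_cos_sq β
  have hnormSq : ‖(t : ℂ) - u‖ ^ 2 = t ^ 2 + ‖u‖ ^ 2 - 2 * t * u.re := by
    simp only [Complex.sq_norm, Complex.normSq_apply, Complex.sub_re, Complex.sub_im,
      Complex.ofReal_re, Complex.ofReal_im]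
    ring
  have htu : t * u.re ≤ t * (Real.cos β * ‖u‖) := mul_le_mul_of_nonneg_left hu ht
  rw [← pow_le_pow_iff_left₀ (by positivity) (norm_nonneg _) two_ne_zero, hnormSq]
  rcases max_cases t ‖u‖ with ⟨hmax, -⟩ | ⟨hmax, -⟩ <;> rw [hmax]
  · nlinarith [sq_nonneg (‖u‖ - Real.cos β * t)]
  · nlinarith [sq_nonneg (t - Real.cos β * ‖u‖)]

/-- For `ν ∈ (0, π/16)`, `m ≥ 4`, `θ` with `Im θ = ν`, `|Re θ| ≤ 10⁻³`,
`λ ∈ ℂ`, `z ∉ C_m(λ)`, `0 ≤ r ≤ |z - λ|` and `s ≥ 0`: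
`|(s + r)/(e^{-θ} s - (z - λ))| ≤ 6/sin(ν/m)`. -/
theorem cone_resolvent_quotient_bound
    (ν m : ℝ) (hν : ν ∈ Set.Ioo (0 : ℝ) (Real.pi / 16)) (hm : 4 ≤ m)
    (θ : ℂ) (hθim : θ.im = ν) (hθre : |θ.re| ≤ 1 / 1000) (lam : ℂ) :
    ∀ z : ℂ, z ∉ cone ν m lam →
      ∀ r : ℝ, 0 ≤ r → r ≤ ‖z - lam‖ →
        ∀ s : ℝ, 0 ≤ s →
          ‖((s : ℂ) + (r : ℂ)) / (Complex.exp (-θ) * (s : ℂ) - (z - lam))‖ ≤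
            6 / Real.sin (ν / m) := by
  intro z hz r hr hrz s hs
  obtain ⟨hν0, hν16⟩ := hν
  have hνm : 0 < ν / m := div_pos hν0 (by linarith)
  have hσ : 0 < Real.sin (ν / m) := by
    refine Real.sin_pos_of_pos_of_lt_pi hνm ?_
    have : ν / m ≤ ν / 4 := by gcongr
    linarith [Real.pi_pos]
  set t := s * Real.exp (-θ.re)
  have hst : s ≤ 2 * t := by
    nlinarith [Real.add_one_le_exp (-θ.re), (abs_le.mp hθre).2]
  have hD : Real.sin (ν / m) * max t ‖z - lam‖
      ≤ ‖Complex.exp (-θ) * s - (z - lam)‖ := by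
    have hrot : ‖(z - lam) * Complex.exp (ν * Complex.I)‖ = ‖z - lam‖ := by
      simp [Complex.norm_exp_ofReal_mul_I]
    have hsector := re_le_cos_mul_norm_of_notMem_cone hνm.le hz
    rw [← hrot] at hsector
    rw [Complex.norm_exp_neg_mul_ofReal_sub, hθim, ← hrot]
    exact sin_mul_max_le_norm_ofReal_sub hσ.le (by positivity) hsector
  rw [norm_div]
  refine div_le_of_le_mul₀ (norm_nonneg _) (by positivity) ?_
  calc ‖(s : ℂ) + r‖ = s + r := by norm_cast; exact abs_of_nonneg (by positivity)
    _ ≤ 6 * max t ‖z - lam‖ := by linarith [le_max_left t ‖z - lam‖, le_max_right t ‖z - lam‖]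
    _ ≤ 6 / Real.sin (ν / m) * ‖Complex.exp (-θ) * s - (z - lam)‖ := by
      rw [div_mul_eq_mul_div, le_div_iff₀ hσ]
      linarith
end

section
/- Let ν ∈ (0, π/16), let m ≥ 4 be a real number, let θ ∈ ℂ with Im θ = ν and |Re θ| ≤ 10⁻³, and let λ ∈ ℂ. Then for every z ∈ ℂ with z ∉ C_m(λ) and every s ≥ 0, one has |λ − z + s·e^{−θ}| ≥ (sin(ν/m)/2) · |λ − z|. -/
/-!
Write `u = λ - z` and `s e^{-θ} = r e^{-iν}` with `r = s e^{-Re θ} ≥ 0`. If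
`w = u + r e^{-iν}` had `‖w‖ < (sin β / 2) ‖u‖` with `β = ν / m`, then `‖u‖ < 2r`, so
`‖w‖ ≤ r sin β`: the rotated point `(z - λ) e^{iν} = r - w e^{iν}` lies in the closed disc of
radius `r sin β` about `r`, which subtends the half-angle `β` at the origin. Hence its argument is
at most `β` in absolute value, i.e. `z ∈ C_m(λ)`.
-/

open Real

theorem Real.abs_arcsin_le_of_abs_le_sin {x β : ℝ} (hβ₀ : 0 ≤ β) (hβ : β ≤ π / 2)
    (hx : |x| ≤ sin β) : |arcsin x| ≤ β := by
  have hx₁ : x ∈ Set.Icc (-1) 1 := abs_le.1 (hx.trans (sin_le_one β))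
  rw [abs_le] at hx ⊢
  constructor
  · rw [le_arcsin_iff_sin_le ⟨by linarith, by linarith⟩ hx₁, sin_neg]
    exact hx.1
  · rw [arcsin_le_iff_le_sin hx₁ ⟨by linarith, hβ⟩]
    exact hx.2

namespace Complex

theorem abs_im_le_mul_norm_of_norm_sub_ofReal_le {q : ℂ} {r c : ℝ} (hc : 0 ≤ c)
    (h : ‖q - r‖ ≤ r * c) : |q.im| ≤ c * ‖q‖ := by
  have hdisc : (q.re - r) ^ 2 + q.im ^ 2 ≤ (r * c) ^ 2 := by
    have := pow_le_pow_left₀ (norm_nonneg _) h 2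
    rwa [Complex.sq_norm, normSq_apply, sub_re, ofReal_re, sub_im, ofReal_im, sub_zero,
      ← sq, ← sq] at this
  have hnorm : ‖q‖ ^ 2 = q.re ^ 2 + q.im ^ 2 := by
    rw [Complex.sq_norm, normSq_apply, ← sq, ← sq]
  refine abs_le_of_sq_le_sq ?_ (by positivity)
  rw [mul_pow, hnorm]
  rcases le_total c 1 with hc₁ | hc₁
  · -- on the disc, `c² q.re² - (1 - c²) q.im² ≥ (q.re - r + c² r)²`
    nlinarith [sq_nonneg (q.re - r + c ^ 2 * r), mul_le_mul_of_nonneg_left hdisc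
      (show 0 ≤ 1 - c ^ 2 by nlinarith)]
  · nlinarith [mul_nonneg (sq_nonneg c) (sq_nonneg q.re),
      mul_le_mul_of_nonneg_right (one_le_pow₀ hc₁ : (1 : ℝ) ≤ c ^ 2) (sq_nonneg q.im)]

theorem abs_arg_le_of_norm_sub_ofReal_le {q : ℂ} {r β : ℝ} (hr : 0 ≤ r) (hβ₀ : 0 ≤ β)
    (hβ : β ≤ π / 2) (h : ‖q - r‖ ≤ r * Real.sin β) : |arg q| ≤ β := by
  have hsin : 0 ≤ Real.sin β := Real.sin_nonneg_of_nonneg_of_le_pi hβ₀ (by linarith [pi_pos])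
  have hre : 0 ≤ q.re := by
    have := (abs_re_le_norm (q - r)).trans h
    rw [sub_re, ofReal_re, abs_le] at this
    nlinarith [Real.sin_le_one β]
  rw [arg_of_re_nonneg hre]
  refine Real.abs_arcsin_le_of_abs_le_sin hβ₀ hβ ?_
  rw [abs_div, abs_norm]
  exact div_le_of_le_mul₀ (norm_nonneg q) hsin (abs_im_le_mul_norm_of_norm_sub_ofReal_le hsin h)

theorem exp_neg_mul_exp_im_mul_I (θ : ℂ) : exp (-θ) * exp (θ.im * I) = Real.exp (-θ.re) := by
  rw [← exp_add, ofReal_exp]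
  congr 1
  apply Complex.ext <;> simp

end Complex

open Complex in
theorem mem_cone_of_abs_arg_le {ν m : ℝ} {w z : ℂ} (h : |arg ((z - w) * exp (ν * I))| ≤ ν / m) :
    z ∈ cone ν m w := by
  set q := (z - w) * exp (ν * I)
  refine ⟨‖q‖, norm_nonneg q, ν - arg q, by rwa [sub_sub_cancel_left, abs_neg], ?_⟩
  calc z = w + q * exp (-(ν * I)) := by
        rw [mul_assoc, ← Complex.exp_add, add_neg_cancel, Complex.exp_zero]; ring
    _ = w + ‖q‖ * exp (arg q * I) * exp (-(ν * I)) := by rw [norm_mul_exp_arg_mul_I]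
    _ = w + ‖q‖ * exp (-((ν - arg q : ℝ) : ℂ) * I) := by
        rw [mul_assoc, ← Complex.exp_add]; push_cast; ring_nf

open Complex in
theorem cone_shifted_point_lower_bound_general
    (ν m : ℝ) (hν : ν ∈ Set.Ioo (0 : ℝ) (Real.pi / 16)) (hm : 4 ≤ m)
    (θ : ℂ) (hθim : θ.im = ν) (lam : ℂ) :
    ∀ z : ℂ, z ∉ cone ν m lam → ∀ s : ℝ, 0 ≤ s →
      (Real.sin (ν / m) / 2) * ‖lam - z‖ ≤
        ‖lam - z + (s : ℂ) * Complex.exp (-θ)‖ := by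
  intro z hz s hs
  by_contra! hlt
  set β := ν / m
  set r := s * Real.exp (-θ.re)
  set w := lam - z + s * Complex.exp (-θ)
  have hβ₀ : 0 ≤ β := div_nonneg hν.1.le (by linarith)
  have hβ : β ≤ π / 2 := by
    have : β ≤ ν / 4 := div_le_div_of_nonneg_left hν.1.le (by norm_num) hm
    linarith [pi_pos, hν.2]
  have hshift : ‖(s : ℂ) * Complex.exp (-θ)‖ = r := by
    rw [norm_mul, norm_exp, norm_real, norm_of_nonneg hs, neg_re]
  have hw : ‖w‖ ≤ r * Real.sin β := by
    have : ‖lam - z‖ ≤ ‖w‖ + r := by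
      calc ‖lam - z‖ = ‖w - s * Complex.exp (-θ)‖ := by rw [add_sub_cancel_right]
        _ ≤ ‖w‖ + r := hshift ▸ norm_sub_le _ _
    have hsin : 0 ≤ Real.sin β := sin_nonneg_of_nonneg_of_le_pi hβ₀ (by linarith [pi_pos])
    nlinarith [Real.sin_le_one β, norm_nonneg w]
  have hrot : (z - lam) * exp (ν * I) - r = -(w * exp (ν * I)) := by
    rw [← hθim]
    simp only [r, w, ofReal_mul]
    linear_combination (s : ℂ) * exp_neg_mul_exp_im_mul_I θ
  refine hz (mem_cone_of_abs_arg_le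
    (abs_arg_le_of_norm_sub_ofReal_le (r := r) (by positivity) hβ₀ hβ ?_))
  rwa [hrot, norm_neg, norm_mul, norm_exp_ofReal_mul_I, mul_one]

/-- For `ν ∈ (0, π/16)`, `m ≥ 4`, `θ` with `Im θ = ν`, `|Re θ| ≤ 10⁻³`,
`λ ∈ ℂ`, `z ∉ C_m(λ)` and `s ≥ 0`: `|λ - z + s e^{-θ}| ≥ (sin(ν/m)/2) |λ - z|`. -/
theorem cone_shifted_point_lower_bound
    (ν m : ℝ) (hν : ν ∈ Set.Ioo (0 : ℝ) (Real.pi / 16)) (hm : 4 ≤ m)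
    (θ : ℂ) (hθim : θ.im = ν) (hθre : |θ.re| ≤ 1 / 1000) (lam : ℂ) :
    ∀ z : ℂ, z ∉ cone ν m lam → ∀ s : ℝ, 0 ≤ s →
      (Real.sin (ν / m) / 2) * ‖lam - z‖ ≤
        ‖lam - z + (s : ℂ) * Complex.exp (-θ)‖ :=
  cone_shifted_point_lower_bound_general ν m hν hm θ hθim lam
end

section
/- Let η, λ ∈ ℂ with |η| < π/16 and |λ| < π/16. Then for every e ≥ 0, every s ≥ 0, and every r > 0 one has |e + e^{−λ}·s + r| ≤ 10 · |e + e^{−η}·s + r| (in particular the right-hand side is nonzero). -/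
/-!
With `a = π/16`, the bound `‖λ‖ < a` gives `‖e^{-λ}‖ = e^{-Re λ} ≤ e^{a}`, while `‖η‖ < a` gives
`Re e^{-η} = e^{-Re η} cos (Im η) ≥ e^{-a} cos a > 0`. Since `e, s, r ≥ 0`, the triangle inequality
bounds the left-hand side by `e + e^{a} s + r`, and the right-hand side is at least ten times its real
part `e + Re e^{-η} s + r`. The numerical fact `e^{a} ≤ 10 e^{-a} cos a` closes the gap.
-/

open Real

namespace Complex

lemma norm_exp_neg_le_of_norm_le {z : ℂ} {a : ℝ} (hz : ‖z‖ ≤ a) : ‖exp (-z)‖ ≤ Real.exp a := by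
  rw [norm_exp, neg_re, Real.exp_le_exp, neg_le]
  exact (neg_abs_le z.re).trans' (neg_le_neg ((abs_re_le_norm z).trans hz))

lemma exp_neg_mul_cos_le_re_exp_neg {z : ℂ} {a : ℝ} (hz : ‖z‖ ≤ a) (ha : a ≤ π / 2) :
    Real.exp (-a) * Real.cos a ≤ (exp (-z)).re := by
  have ha₀ : 0 ≤ a := (norm_nonneg z).trans hz
  have hcos : Real.cos a ≤ Real.cos z.im := by
    rw [← Real.cos_abs z.im]
    exact Real.cos_le_cos_of_nonneg_of_le_pi (abs_nonneg _) (by linarith [pi_pos])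
      ((abs_im_le_norm z).trans hz)
  have hexp : Real.exp (-a) ≤ Real.exp (-z.re) :=
    Real.exp_le_exp.2 (neg_le_neg ((le_abs_self z.re).trans ((abs_re_le_norm z).trans hz)))
  rw [exp_re, neg_re, neg_im, Real.cos_neg]
  exact mul_le_mul hexp hcos (Real.cos_nonneg_of_mem_Icc ⟨by linarith, ha⟩) (Real.exp_pos _).le

lemma re_ofReal_add_mul_ofReal_add_ofReal (e s r : ℝ) (w : ℂ) :
    ((e : ℂ) + w * s + r).re = e + w.re * s + r := by
  simp

lemma norm_ofReal_add_mul_ofReal_add_ofReal_le {e s r : ℝ} (he : 0 ≤ e) (hs : 0 ≤ s) (hr : 0 ≤ r)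
    (w : ℂ) : ‖(e : ℂ) + w * s + r‖ ≤ e + ‖w‖ * s + r := by
  calc ‖(e : ℂ) + w * s + r‖ ≤ ‖(e : ℂ)‖ + ‖w * s‖ + ‖(r : ℂ)‖ := norm_add₃_le
    _ = e + ‖w‖ * s + r := by
      rw [norm_mul, norm_real, norm_real, norm_real, Real.norm_of_nonneg he,
        Real.norm_of_nonneg hs, Real.norm_of_nonneg hr]

lemma norm_ofReal_add_mul_ofReal_add_ofReal_le_mul {w₁ w₂ : ℂ} {K : ℝ} (hK : 1 ≤ K)
    (hw : ‖w₁‖ ≤ K * w₂.re) {e s r : ℝ} (he : 0 ≤ e) (hs : 0 ≤ s) (hr : 0 ≤ r) :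
    ‖(e : ℂ) + w₁ * s + r‖ ≤ K * ‖(e : ℂ) + w₂ * s + r‖ := by
  calc ‖(e : ℂ) + w₁ * s + r‖ ≤ e + ‖w₁‖ * s + r :=
        norm_ofReal_add_mul_ofReal_add_ofReal_le he hs hr w₁
    _ ≤ K * (e + w₂.re * s + r) := by nlinarith [mul_le_mul_of_nonneg_right hw hs]
    _ ≤ K * ‖(e : ℂ) + w₂ * s + r‖ := by
      rw [← re_ofReal_add_mul_ofReal_add_ofReal]
      exact mul_le_mul_of_nonneg_left (re_le_norm _) (by linarith)

lemma ofReal_add_mul_ofReal_add_ofReal_ne_zero {w : ℂ} (hw : 0 ≤ w.re) {e s r : ℝ} (he : 0 ≤ e)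
    (hs : 0 ≤ s) (hr : 0 < r) : (e : ℂ) + w * s + r ≠ 0 := by
  intro h
  have := re_ofReal_add_mul_ofReal_add_ofReal e s r w
  rw [h, zero_re] at this
  nlinarith [mul_nonneg hw hs]

end Complex

lemma exp_pi_div_sixteen_le :
    Real.exp (π / 16) ≤ 10 * (Real.exp (-(π / 16)) * Real.cos (π / 16)) := by
  have hexp : Real.exp (π / 16) * Real.exp (π / 16) ≤ Real.exp 1 := by
    rw [← Real.exp_add, Real.exp_le_exp]
    linarith [pi_le_four]
  have hcos : 1 - (π / 16) ^ 2 / 2 ≤ Real.cos (π / 16) := Real.one_sub_sq_div_two_le_cos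
  have hsq : (π / 16) ^ 2 ≤ 1 / 16 := by nlinarith [pi_pos, pi_le_four]
  have hcancel : Real.exp (π / 16) * Real.exp (-(π / 16)) = 1 := by rw [← Real.exp_add]; simp
  nlinarith [Real.exp_one_lt_d9, Real.exp_pos (π / 16)]

/-- For `η, λ ∈ ℂ` with `|η| < π/16`, `|λ| < π/16`, and all
`e ≥ 0`, `s ≥ 0`, `r > 0`: `|e + e^{-λ} s + r| ≤ 10 |e + e^{-η} s + r|`
(and in particular the right-hand side is nonzero). -/
theorem dilated_free_hamiltonian_comparison
    (η lam : ℂ) (hη : ‖η‖ < Real.pi / 16) (hlam : ‖lam‖ < Real.pi / 16) :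
    ∀ e : ℝ, 0 ≤ e → ∀ s : ℝ, 0 ≤ s → ∀ r : ℝ, 0 < r →
      ‖(e : ℂ) + Complex.exp (-lam) * (s : ℂ) + (r : ℂ)‖ ≤
          10 * ‖(e : ℂ) + Complex.exp (-η) * (s : ℂ) + (r : ℂ)‖ ∧
        (e : ℂ) + Complex.exp (-η) * (s : ℂ) + (r : ℂ) ≠ 0 := by
  intro e he s hs r hr
  have hnorm : ‖Complex.exp (-lam)‖ ≤ 10 * (Complex.exp (-η)).re := by
    calc ‖Complex.exp (-lam)‖ ≤ Real.exp (π / 16) := Complex.norm_exp_neg_le_of_norm_le hlam.le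
      _ ≤ 10 * (Real.exp (-(π / 16)) * Real.cos (π / 16)) := exp_pi_div_sixteen_le
      _ ≤ 10 * (Complex.exp (-η)).re := by
        gcongr
        exact Complex.exp_neg_mul_cos_le_re_exp_neg hη.le (by linarith [pi_pos])
  have hre : 0 ≤ (Complex.exp (-η)).re := by linarith [norm_nonneg (Complex.exp (-lam))]
  exact ⟨Complex.norm_ofReal_add_mul_ofReal_add_ofReal_le_mul (by norm_num) hnorm he hs hr.le,
    Complex.ofReal_add_mul_ofReal_add_ofReal_ne_zero hre he hs hr⟩
end
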